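/- arXiv:2111.14256 — 8 statements merged into one kernel-verified Lean document; each statement's English description precedes it below -/
import Mathlib

section
/- Let λ be a totally real algebraic integer with λ² ∉ ℤ, and suppose there exist nonnegative integers a₀, a₁, a₂, … (almost all zero) satisfying Σₖ aₖ/(λ² − k) = 1. Then for every nonzero integer d, there exist nonnegative integers b₀, b₁, … (almost all zero) satisfying Σₖ bₖ/((dλ)² − k) = 1. -/
open Polynomial

/-- If a totally real algebraic integer `lam` with `lam² ∉ ℤ` satisfies the
arboreal-height-2 criterion `∑ₖ aₖ/(lam² − k) = 1`, then so does `d·lam`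
for every nonzero integer `d`. -/
theorem stmt0 (lam : ℝ) (hint : IsIntegral ℤ lam)
    (htr : ((minpoly ℚ lam).map (algebraMap ℚ ℝ)).Splits)
    (hsq : ∀ z : ℤ, (z : ℝ) ≠ lam ^ 2)
    (h : ∃ a : ℕ →₀ ℕ, (a.sum fun k ak => (ak : ℝ) / (lam ^ 2 - (k : ℝ))) = 1) :
    ∀ d : ℤ, d ≠ 0 →
      ∃ b : ℕ →₀ ℕ,
        (b.sum fun k bk => (bk : ℝ) / (((d : ℝ) * lam) ^ 2 - (k : ℝ))) = 1 := by
  intro d hd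
  obtain ⟨a, ha⟩ := h
  set m : ℕ := d.natAbs ^ 2 with hm
  have hmpos : 0 < m := pow_pos (Int.natAbs_pos.mpr hd) 2
  have hmne : (m : ℝ) ≠ 0 := by exact_mod_cast hmpos.ne'
  have hmr : ((d : ℝ) * lam) ^ 2 = (m : ℝ) * lam ^ 2 := by
    have : ((d.natAbs : ℝ)) ^ 2 = (d : ℝ) ^ 2 := by
      rw [Nat.cast_natAbs]; push_cast; rw [sq_abs]
    rw [mul_pow, hm]
    push_cast
    rw [this]
  refine ⟨m • a.mapDomain (fun k => m * k), ?_⟩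
  rw [Finsupp.sum_smul_index (fun i => by simp)]
  rw [Finsupp.sum_mapDomain_index (fun b => by simp)
      (fun b c₁ c₂ => by push_cast [smul_eq_mul]; ring)]
  rw [← ha]
  apply Finsupp.sum_congr
  intro k hk
  push_cast [smul_eq_mul, hmr]
  rw [← mul_sub, mul_div_mul_left _ _ hmne]
end

section
/- Let λ be a totally real quadratic algebraic integer with λ² ∉ ℤ and [ℚ(λ²):ℚ] = 2. Then there exist nonnegative integers a₀, a₁, a₂, … (almost all zero) satisfying Σₖ aₖ/(λ² − k) = 1. -/
open Polynomial
open IntermediateField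

set_option maxHeartbeats 1000000

/-- Every totally real quadratic integer (with `lam² ∉ ℤ` and `[ℚ(lam²):ℚ] = 2`)
satisfies the arboreal-height-2 criterion `∑ₖ aₖ/(lam² − k) = 1`. -/
theorem stmt2 (lam : ℝ) (hint : IsIntegral ℤ lam)
    (htr : ((minpoly ℚ lam).map (algebraMap ℚ ℝ)).Splits)
    (hsq : ∀ z : ℤ, (z : ℝ) ≠ lam ^ 2)
    (hdeg : (minpoly ℚ (lam ^ 2)).natDegree = 2) :
    ∃ a : ℕ →₀ ℕ, (a.sum fun k ak => (ak : ℝ) / (lam ^ 2 - (k : ℝ))) = 1 := by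
  set x : ℝ := lam ^ 2 with hxdef
  -- irrationality of x
  have hirr : ∀ q : ℚ, (q : ℝ) ≠ x := by
    intro q hq
    have : minpoly ℚ x = X - C q := by
      rw [← hq]
      exact (minpoly.eq_X_sub_C ℝ q)
    rw [this, natDegree_X_sub_C] at hdeg
    omega
  -- the integer quadratic
  obtain ⟨t, n, hq⟩ : ∃ t n : ℤ, x ^ 2 = (t : ℝ) * x - (n : ℝ) := by
    have hxint : IsIntegral ℤ x := hint.pow 2
    have hmeq : minpoly ℚ x = (minpoly ℤ x).map (algebraMap ℤ ℚ) :=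
      minpoly.isIntegrallyClosed_eq_field_fractions' ℚ hxint
    have hmon : (minpoly ℤ x).Monic := minpoly.monic hxint
    have hnd : (minpoly ℤ x).natDegree = 2 := by
      rw [hmeq, natDegree_map_eq_of_injective (algebraMap ℤ ℚ).injective_int] at hdeg
      exact hdeg
    refine ⟨-(minpoly ℤ x).coeff 1, (minpoly ℤ x).coeff 0, ?_⟩
    have h0 : aeval x (minpoly ℤ x) = 0 := minpoly.aeval ℤ x
    rw [Polynomial.aeval_eq_sum_range, hnd] at h0
    have hc2 : (minpoly ℤ x).coeff 2 = 1 := by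
      have := hmon.coeff_natDegree
      rwa [hnd] at this
    simp [Finset.sum_range_succ, hc2, zsmul_eq_mul] at h0
    push_cast
    linarith
  set y : ℝ := (t : ℝ) - x with hydef
  have hsum : x + y = (t : ℝ) := by ring
  have hprod : x * y = (n : ℝ) := by rw [hydef]; nlinarith [hq]
  have hxpos : 0 < x := by
    have h0 : (0:ℝ) ≠ x := by simpa using hsq 0
    exact lt_of_le_of_ne (sq_nonneg lam) h0
  have hynonneg : 0 ≤ y := by
    by_contra hy
    push_neg at hy
    have hlamQ : IsIntegral ℚ lam := IsIntegral.tower_top hint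
    haveI hFD : FiniteDimensional ℚ ℚ⟮lam⟯ :=
      IntermediateField.adjoin.finiteDimensional hlamQ
    set lamK : ℚ⟮lam⟯ := IntermediateField.AdjoinSimple.gen ℚ lam with hlamKdef
    have hPne : minpoly ℚ lam ≠ 0 := minpoly.ne_zero hlamQ
    -- every real root of the minimal polynomial of lam squares to x
    have hroot2 : ∀ r : ℝ, aeval r (minpoly ℚ lam) = 0 → r ^ 2 = x := by
      intro r hr
      have hdvd : minpoly ℚ lam ∣ (X ^ 4 - C (t : ℚ) * X ^ 2 + C (n : ℚ)) := by
        apply minpoly.dvd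
        have h1 : aeval lam (X ^ 4 - C (t : ℚ) * X ^ 2 + C (n : ℚ) : ℚ[X])
            = lam ^ 4 - (t : ℝ) * lam ^ 2 + (n : ℝ) := by
          simp [Rat.cast_intCast]
        rw [h1]
        have hx4 : lam ^ 4 = x ^ 2 := by rw [hxdef]; ring
        rw [hx4, ← hxdef]
        linarith [hq]
      obtain ⟨c, hc⟩ := hdvd
      have hr4 : r ^ 4 - (t : ℝ) * r ^ 2 + (n : ℝ) = 0 := by
        have h2 := congrArg (aeval r) hc
        have h3 : aeval r (X ^ 4 - C (t : ℚ) * X ^ 2 + C (n : ℚ) : ℚ[X])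
            = r ^ 4 - (t : ℝ) * r ^ 2 + (n : ℝ) := by
          simp [Rat.cast_intCast]
        rw [map_mul, hr, zero_mul, h3] at h2
        exact h2
      have hfact : (r ^ 2 - x) * (r ^ 2 - y) = 0 := by
        rw [hydef]
        linear_combination hr4 - hq
      rcases mul_eq_zero.1 hfact with h | h
      · linarith
      · exfalso
        nlinarith [sq_nonneg r]
    -- every embedding into ℂ sends lamK ^ 2 to x
    have hmain : ∀ σ : ℚ⟮lam⟯ →ₐ[ℚ] ℂ, σ (lamK ^ 2) = ((x : ℝ) : ℂ) := by
      intro σ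
      have hPK : aeval lamK (minpoly ℚ lam) = 0 := by
        apply (algebraMap ℚ⟮lam⟯ ℝ).injective
        rw [map_zero, ← Polynomial.aeval_algebraMap_apply,
          IntermediateField.AdjoinSimple.algebraMap_gen]
        exact minpoly.aeval ℚ lam
      have hz : aeval (σ lamK) (minpoly ℚ lam) = 0 := by
        rw [Polynomial.aeval_algHom_apply, hPK, map_zero]
      obtain ⟨r, hrz, hr⟩ : ∃ r : ℝ, ((r : ℂ) = σ lamK) ∧ aeval r (minpoly ℚ lam) = 0 := by
        have hsplitℝ : ((minpoly ℚ lam).map (algebraMap ℚ ℝ)).Splits :=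
          htr
        have hmapsC : (minpoly ℚ lam).map (algebraMap ℚ ℂ)
            = ((minpoly ℚ lam).map (algebraMap ℚ ℝ)).map (algebraMap ℝ ℂ) := by
          rw [Polynomial.map_map, ← IsScalarTower.algebraMap_eq]
        have hzroot : σ lamK ∈ ((minpoly ℚ lam).map (algebraMap ℚ ℂ)).roots := by
          rw [mem_roots (Polynomial.map_ne_zero hPne), IsRoot, eval_map, ← aeval_def]
          exact hz
        rw [hmapsC, hsplitℝ.roots_map _] at hzroot
        obtain ⟨r, hr1, hr2⟩ := Multiset.mem_map.1 hzroot
        refine ⟨r, hr2, ?_⟩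
        have := (mem_roots (Polynomial.map_ne_zero hPne)).1 hr1
        rwa [IsRoot, eval_map, ← aeval_def] at this
      have hs2 : σ (lamK ^ 2) = ((r ^ 2 : ℝ) : ℂ) := by
        rw [map_pow, ← hrz]
        push_cast
        ring
      rw [hs2, hroot2 r hr]
    -- conclude x is rational via the trace, contradiction
    have htrace := trace_eq_sum_embeddings (K := ℚ) (L := ℚ⟮lam⟯) (E := ℂ) (x := lamK ^ 2)
    rw [Finset.sum_congr rfl (fun σ _ => hmain σ), Finset.sum_const, Finset.card_univ] at htrace
    haveI : Nonempty (ℚ⟮lam⟯ →ₐ[ℚ] ℂ) := ⟨IsAlgClosed.lift⟩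
    have hd : 0 < Fintype.card (ℚ⟮lam⟯ →ₐ[ℚ] ℂ) := Fintype.card_pos
    set d : ℕ := Fintype.card (ℚ⟮lam⟯ →ₐ[ℚ] ℂ) with hddef
    set c : ℚ := Algebra.trace ℚ ℚ⟮lam⟯ (lamK ^ 2) with hcdef
    apply hirr (c / d)
    have hcd : ((c : ℂ)) = (d : ℂ) * ((x : ℝ) : ℂ) := by
      rw [nsmul_eq_mul] at htrace
      simpa using htrace
    have : ((c / d : ℚ) : ℂ) = ((x : ℝ) : ℂ) := by
      push_cast
      rw [div_eq_iff (by exact_mod_cast hd.ne')]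
      rw [hcd]
      ring
    exact_mod_cast this
  have hypos : 0 < y := by
    rcases lt_or_eq_of_le hynonneg with h | h
    · exact h
    · exfalso
      have hn0 : (n : ℝ) = 0 := by rw [← hprod, ← h]; ring
      have : x = (t : ℝ) := by
        have : x * (x - t) = 0 := by nlinarith [hq]
        rcases mul_eq_zero.1 this with h1 | h1
        · exact absurd h1 (ne_of_gt hxpos)
        · linarith
      exact hsq t this.symm
  -- the gap between the two roots is more than 1
  have hgap : 1 < |x - y| := by
    have hsq2 : (x - y) ^ 2 = ((t ^ 2 - 4 * n : ℤ) : ℝ) := by push_cast; nlinarith [hq]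
    have hD0 : (0:ℝ) ≤ ((t ^ 2 - 4 * n : ℤ) : ℝ) := by rw [← hsq2]; positivity
    have hD0' : (0:ℤ) ≤ t ^ 2 - 4 * n := by exact_mod_cast hD0
    have hDne : t ^ 2 - 4 * n ≠ 0 := by
      intro h
      have hxy : x = y := by
        have : (x - y)^2 = 0 := by rw [hsq2, h]; norm_num
        nlinarith [this]
      refine hirr ((t : ℚ)/2) ?_
      have : x + x = (t:ℝ) := by rw [← hsum, hxy]
      push_cast
      linarith
    have hDne1 : t ^ 2 - 4 * n ≠ 1 := by
      intro h
      have h1 : (x - y) ^ 2 = 1 := by rw [hsq2, h]; norm_num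
      have h2 : (x - y - 1) * (x - y + 1) = 0 := by nlinarith [h1]
      rcases mul_eq_zero.1 h2 with h3 | h3
      · refine hirr ((t + 1 : ℚ)/2) ?_
        push_cast
        rw [hydef] at h3
        linarith
      · refine hirr ((t - 1 : ℚ)/2) ?_
        push_cast
        rw [hydef] at h3
        linarith
    have hD2 : (2:ℤ) ≤ t ^ 2 - 4 * n := by omega
    have : (2:ℝ) ≤ (x - y)^2 := by rw [hsq2]; exact_mod_cast hD2
    nlinarith [abs_nonneg (x - y), sq_abs (x - y)]
  -- choose the integer m = p + 1 between the roots
  set u : ℝ := min x y with hudef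
  have hupos : 0 < u := lt_min hxpos hypos
  set p : ℕ := ⌊u⌋₊ with hpdef
  have hpu : (p : ℝ) ≤ u := Nat.floor_le hupos.le
  have hum : u < (p : ℝ) + 1 := Nat.lt_floor_add_one u
  have hmv : (p : ℝ) + 1 < max x y := by
    have hmm : max x y - min x y = |x - y| := by
      rw [abs_sub_comm]; exact max_sub_min_eq_abs x y
    have : u + 1 < max x y := by rw [hudef]; linarith [hmm, hgap]
    linarith
  -- the denominators are nonzero
  have hdp : x - (p : ℝ) ≠ 0 := by
    have := hsq (p : ℤ)
    push_cast at this
    exact fun h => this (by linarith)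
  have hdm : x - ((p : ℝ) + 1) ≠ 0 := by
    have := hsq ((p : ℤ) + 1)
    push_cast at this
    exact fun h => this (by linarith)
  -- the numerators
  set A : ℤ := (p:ℤ)^2 - t*(p:ℤ) + n with hAdef
  set B : ℤ := t*((p:ℤ)+1) - ((p:ℤ)+1)^2 - n with hBdef
  have hA : (A : ℝ) = (x - (p:ℝ)) * (y - (p:ℝ)) := by
    rw [hAdef]
    push_cast
    linear_combination - hprod
  have hB : (B : ℝ) = (x - ((p:ℝ)+1)) * (((p:ℝ)+1) - y) := by
    rw [hBdef]
    push_cast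
    linear_combination hprod
  have hpx : (p : ℝ) ≤ x := le_trans hpu (min_le_left x y)
  have hpy : (p : ℝ) ≤ y := le_trans hpu (min_le_right x y)
  have hA0 : 0 ≤ A := by
    have : (0:ℝ) ≤ (A : ℝ) := by
      rw [hA]; exact mul_nonneg (by linarith) (by linarith)
    exact_mod_cast this
  have hB0 : 0 ≤ B := by
    have : (0:ℝ) ≤ (B : ℝ) := by
      rw [hB]
      rcases le_total x y with hxy | hxy
      · have h1 : u = x := min_eq_left hxy
        have h2 : max x y = y := max_eq_right hxy
        have : x - ((p:ℝ)+1) ≤ 0 := by rw [h1] at hum; linarith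
        have : ((p:ℝ)+1) - y ≤ 0 := by rw [h2] at hmv; linarith
        nlinarith
      · have h1 : u = y := min_eq_right hxy
        have h2 : max x y = x := max_eq_left hxy
        have : 0 ≤ x - ((p:ℝ)+1) := by rw [h2] at hmv; linarith
        have : 0 ≤ ((p:ℝ)+1) - y := by rw [h1] at hum; linarith
        exact mul_nonneg (by linarith) this
    exact_mod_cast this
  refine ⟨Finsupp.single p A.toNat + Finsupp.single (p+1) B.toNat, ?_⟩
  rw [Finsupp.sum_add_index' (fun a => by simp) (fun a b₁ b₂ => by push_cast; ring),
    Finsupp.sum_single_index (by simp), Finsupp.sum_single_index (by simp)]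
  have hAc : ((A.toNat : ℕ) : ℝ) = (A : ℝ) := by
    exact_mod_cast congrArg (Int.cast : ℤ → ℝ) (Int.toNat_of_nonneg hA0)
  have hBc : ((B.toNat : ℕ) : ℝ) = (B : ℝ) := by
    exact_mod_cast congrArg (Int.cast : ℤ → ℝ) (Int.toNat_of_nonneg hB0)
  rw [Nat.cast_add, Nat.cast_one, hAc, hBc, hA, hB]
  field_simp
  ring
end

section
/- Let λ be a totally real algebraic integer with λ² ∉ ℤ and minimal polynomial F of λ². Suppose there exist nonnegative integers a₀, a₁, … (almost all zero) with Σₖ aₖ/(λ² − k) = 1. Then for every prime p, the reduction of F modulo p factors into irreducible polynomials in 𝔽_p[x] each of degree ≤ p. -/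
open Polynomial

/-- Key algebraic identity in a field: clearing denominators. -/
lemma key_eval {K : Type*} [Field K] {ι : Type*} [DecidableEq ι] (s : Finset ι)
    (f b : ι → K) (x : K) (hx : ∀ i ∈ s, x - f i ≠ 0) :
    (∏ i ∈ s, (x - f i)) - ∑ i ∈ s, b i * ∏ j ∈ s.erase i, (x - f j)
      = (∏ i ∈ s, (x - f i)) * (1 - ∑ i ∈ s, b i / (x - f i)) := by
  rw [mul_sub, mul_one, Finset.mul_sum]
  congr 1
  refine Finset.sum_congr rfl fun i hi => ?_
  rw [← Finset.mul_prod_erase s _ hi]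
  field_simp [hx i hi]

/-- Mod-p obstruction: if a totally real algebraic integer `lam` with
`lam² ∉ ℤ` satisfies the arboreal-height-2 criterion, then for every prime
`p` the reduction mod `p` of the minimal polynomial of `lam²` factors into
irreducibles of degree ≤ p. -/
theorem stmt9 (lam : ℝ) (hint : IsIntegral ℤ lam)
    (htr : ((minpoly ℚ lam).map (algebraMap ℚ ℝ)).Splits)
    (hsq : ∀ z : ℤ, (z : ℝ) ≠ lam ^ 2)
    (h : ∃ a : ℕ →₀ ℕ, (a.sum fun k ak => (ak : ℝ) / (lam ^ 2 - (k : ℝ))) = 1) :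
    ∀ p : ℕ, p.Prime →
      ∀ g : Polynomial (ZMod p), Irreducible g →
        g ∣ (minpoly ℤ (lam ^ 2)).map (Int.castRingHom (ZMod p)) →
          g.natDegree ≤ p := by
  obtain ⟨a, ha⟩ := h
  set s := a.support with hs
  have hsum : ∑ k ∈ s, (a k : ℝ) / (lam ^ 2 - (k : ℝ)) = 1 := by
    rw [Finsupp.sum] at ha; exact ha
  have hx : ∀ k : ℕ, lam ^ 2 - (k : ℝ) ≠ 0 := by
    intro k h0
    exact hsq k (by push_cast; linarith)
  -- the integer polynomial G obtained by clearing denominators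
  set G : Polynomial ℤ := (∏ k ∈ s, (X - C (k : ℤ)))
      - ∑ k ∈ s, C (a k : ℤ) * ∏ j ∈ s.erase k, (X - C (j : ℤ)) with hG
  have hGzero : aeval (lam ^ 2 : ℝ) G = 0 := by
    have key := key_eval s (fun k => (k : ℝ)) (fun k => (a k : ℝ)) (lam ^ 2)
      (fun k _ => hx k)
    simp only [hG, map_sub, map_sum, map_prod, map_mul, aeval_X, aeval_C]
    push_cast
    rw [key, hsum]
    simp
  have hint2 : IsIntegral ℤ (lam ^ 2) := hint.pow 2
  have hdvd : minpoly ℤ (lam ^ 2) ∣ G := minpoly.isIntegrallyClosed_dvd hint2 hGzero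
  -- s is nonempty
  have hsne : s.Nonempty := by
    rcases Finset.eq_empty_or_nonempty s with he | hne
    · rw [he] at hsum; simp at hsum
    · exact hne
  intro p hp g hirr hgdvd
  haveI : Fact p.Prime := ⟨hp⟩
  haveI := Fact.mk hirr
  have hgG : g ∣ G.map (Int.castRingHom (ZMod p)) :=
    hgdvd.trans (Polynomial.map_dvd _ hdvd)
  set K := AdjoinRoot g with hK
  set θ : K := AdjoinRoot.root g with hθ
  have hθG : aeval θ (G.map (Int.castRingHom (ZMod p))) = 0 := by
    obtain ⟨q, hq⟩ := hgG
    rw [hq, map_mul]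
    have : aeval θ g = 0 := by rw [hθ, AdjoinRoot.aeval_eq, AdjoinRoot.mk_self]
    rw [this, zero_mul]
  by_contra hle
  push_neg at hle
  -- minimality of g
  have hmin : ∀ q : Polynomial (ZMod p), q ≠ 0 → aeval θ q = 0 →
      g.natDegree ≤ q.natDegree := by
    intro q hq0 hq
    refine Polynomial.natDegree_le_of_dvd ?_ hq0
    rw [hθ, AdjoinRoot.aeval_eq] at hq
    exact AdjoinRoot.mk_eq_zero.mp hq
  have hne : ∀ r : ZMod p, θ - algebraMap (ZMod p) K r ≠ 0 := by
    intro r h0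
    have h1 : aeval θ (X - C r) = 0 := by
      simpa [sub_eq_zero] using h0
    have h2 := hmin (X - C r) (X_sub_C_ne_zero r) h1
    rw [natDegree_X_sub_C] at h2
    have := hp.two_le
    omega
  have hxK : ∀ k : ℕ, θ - (k : K) ≠ 0 := by
    intro k
    have := hne (k : ZMod p)
    rwa [map_natCast] at this
  -- evaluate G mod p at θ
  have hGpθ : (∏ k ∈ s, (θ - (k : K)))
      - ∑ k ∈ s, (a k : K) * ∏ j ∈ s.erase k, (θ - (j : K)) = 0 := by
    have := hθG
    simp only [hG, Polynomial.map_sub, Polynomial.map_sum, Polynomial.map_prod,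
      Polynomial.map_mul, Polynomial.map_X, Polynomial.map_C, map_sub, map_sum,
      map_prod, map_mul, aeval_X, aeval_C] at this
    convert this using 2 <;> push_cast <;> simp [algebraMap_int_eq]
  have hsumK : ∑ k ∈ s, (a k : K) / (θ - (k : K)) = 1 := by
    have key := key_eval s (fun k => (k : K)) (fun k => (a k : K)) θ
      (fun k _ => hxK k)
    rw [key] at hGpθ
    have hprod : (∏ k ∈ s, (θ - (k : K))) ≠ 0 :=
      Finset.prod_ne_zero_iff.mpr fun k _ => hxK k
    have := (mul_eq_zero.mp hGpθ).resolve_left hprod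
    exact (sub_eq_zero.mp this).symm
  -- group by residues mod p
  set T : Finset (ZMod p) := s.image (Nat.cast : ℕ → ZMod p) with hT
  set c : ZMod p → ZMod p :=
    fun r => ∑ k ∈ s.filter (fun k : ℕ => (k : ZMod p) = r), (a k : ZMod p) with hc
  set H : Polynomial (ZMod p) := (∏ r ∈ T, (X - C r))
      - ∑ r ∈ T, C (c r) * ∏ t ∈ T.erase r, (X - C t) with hH
  have hTcard : T.card ≤ p := by
    have := Finset.card_le_univ T
    simpa [ZMod.card] using this
  have hTne : T.Nonempty := hsne.image _
  -- θ is a root of H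
  have hsumT : ∑ r ∈ T, algebraMap (ZMod p) K (c r) / (θ - algebraMap (ZMod p) K r)
      = 1 := by
    rw [← hsumK]
    rw [← Finset.sum_fiberwise_of_maps_to (g := fun k : ℕ => (k : ZMod p))
      (fun k hk => Finset.mem_image_of_mem _ hk)
      (f := fun k => (a k : K) / (θ - (k : K)))]
    refine Finset.sum_congr rfl fun r hr => ?_
    rw [hc, map_sum, Finset.sum_div]
    refine Finset.sum_congr rfl fun k hk => ?_
    have hkr : (k : ZMod p) = r := (Finset.mem_filter.mp hk).2
    rw [map_natCast, ← hkr, map_natCast]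
  have hHθ : aeval θ H = 0 := by
    have key := key_eval T (fun r => algebraMap (ZMod p) K r)
      (fun r => algebraMap (ZMod p) K (c r)) θ (fun r _ => hne r)
    simp only [hH, map_sub, map_sum, map_prod, map_mul, aeval_X, aeval_C]
    rw [key, hsumT]
    simp
  -- H is nonzero with natDegree ≤ p
  have hPmonic : (∏ r ∈ T, (X - C r) : Polynomial (ZMod p)).Monic :=
    monic_prod_of_monic _ _ fun r _ => monic_X_sub_C r
  have hPdeg : (∏ r ∈ T, (X - C r) : Polynomial (ZMod p)).natDegree = T.card := by
    rw [natDegree_prod _ _ fun r _ => X_sub_C_ne_zero r]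
    simp
  have hQdeg : (∑ r ∈ T, C (c r) * ∏ t ∈ T.erase r, (X - C t) :
      Polynomial (ZMod p)).natDegree < T.card := by
    have h1 : (∑ r ∈ T, C (c r) * ∏ t ∈ T.erase r, (X - C t) :
        Polynomial (ZMod p)).natDegree ≤ T.card - 1 := by
      refine natDegree_sum_le_of_forall_le _ _ fun r hr => ?_
      refine (natDegree_C_mul_le _ _).trans ?_
      rw [natDegree_prod _ _ fun t _ => X_sub_C_ne_zero t]
      simp [Finset.card_erase_of_mem hr]
    have h2 : 1 ≤ T.card := hTne.card_pos
    omega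
  have hHne : H ≠ 0 := by
    have hmono : H.Monic := by
      refine hPmonic.sub_of_left ?_
      have hPd : (∏ r ∈ T, (X - C r) : Polynomial (ZMod p)).degree = (T.card : ℕ) := by
        rw [degree_eq_natDegree hPmonic.ne_zero, hPdeg]
      rw [hPd]
      exact lt_of_le_of_lt degree_le_natDegree (by exact_mod_cast hQdeg)
    exact hmono.ne_zero
  have hHdeg : H.natDegree ≤ p := by
    refine le_trans ?_ hTcard
    rw [hH]
    refine (natDegree_sub_le _ _).trans ?_
    exact max_le (le_of_eq hPdeg) (le_of_lt hQdeg)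
  have := hmin H hHne hHθ
  omega
end

section
/- Let λ be a totally real algebraic integer with n = [ℚ(λ²):ℚ] ≥ 2, λ² ∉ ℤ, and let 0 < λ₁² < ⋯ < λₙ² be the conjugates of λ². If λ is an eigenvalue of a rooted tree of height 2, then for every i = 1, …, n−1 there exists a positive integer k with λᵢ² < k < λ_{i+1}². -/
open Polynomial

section AuxGraph
variable {V : Type*} [DecidableEq V] {G : SimpleGraph V}
open SimpleGraph

lemma aux_walk_two {a b : V} (p : G.Walk a b) (h : p.length = 2) :
    ∃ c, G.Adj a c ∧ G.Adj c b := by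
  cases p with
  | nil => simp at h
  | cons h1 q =>
    cases q with
    | nil => simp at h
    | cons h2 q2 =>
      cases q2 with
      | nil => exact ⟨_, h1, h2⟩
      | cons h3 q3 => simp [Nat.succ_eq_add_one] at h

lemma aux_dist_two (hG : G.IsTree) {root v : V} (hh : G.dist root v ≤ 2)
    (hv : v ≠ root) (hnadj : ¬ G.Adj root v) : ∃ c, G.Adj root c ∧ G.Adj c v := by
  have hconn := hG.isConnected
  have hd2 : G.dist root v = 2 := by
    have h0 : G.dist root v ≠ 0 := by
      rw [SimpleGraph.dist_ne_zero_iff_ne_and_reachable]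
      exact ⟨Ne.symm hv, hconn root v⟩
    have h1 : G.dist root v ≠ 1 := by
      rw [Ne, SimpleGraph.dist_eq_one_iff_adj]; exact hnadj
    omega
  obtain ⟨p, hp⟩ := hconn.exists_walk_length_eq_dist root v
  exact aux_walk_two p (by rw [hp, hd2])

lemma aux_far_vertex (hG : G.IsTree) {root : V} (hh : ∀ v, G.dist root v ≤ 2)
    {v : V} (hv : v ≠ root) (hnadj : ¬ G.Adj root v) :
    ∃ c, G.Adj root c ∧ G.Adj c v ∧ ∀ w, G.Adj v w → w = c := by
  have hconn := hG.isConnected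
  have huniq := hG.existsUnique_path
  obtain ⟨c, h, h'⟩ := aux_dist_two hG (hh v) hv hnadj
  refine ⟨c, h, h', ?_⟩
  intro w hvw
  by_contra hwc
  have hwroot : w ≠ root := by rintro rfl; exact hnadj hvw.symm
  have hcv : c ≠ v := h'.ne
  have hrootc : root ≠ c := h.ne
  have hrootv : root ≠ v := Ne.symm hv
  by_cases hrw : G.Adj root w
  · have hwv : w ≠ v := hvw.symm.ne
    have hp₁ : (Walk.cons h (Walk.cons h' Walk.nil) : G.Walk root v).IsPath := by
      simp [Walk.cons_isPath_iff, hcv, hrootc, hrootv]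
    have hp₂ : (Walk.cons hrw (Walk.cons hvw.symm Walk.nil) : G.Walk root v).IsPath := by
      simp [Walk.cons_isPath_iff, hwv, hrw.ne, hrootv]
    have heq := (huniq root v).unique hp₁ hp₂
    have := congrArg Walk.support heq
    simp [Walk.support_cons] at this
    exact hwc this.symm
  · obtain ⟨c', h2, h2'⟩ := aux_dist_two hG (hh w) hwroot hrw
    have hcw : c ≠ w := by rintro rfl; exact hrw h
    have hwv : w ≠ v := hvw.symm.ne
    have hp₁ : (Walk.cons h2 (Walk.cons h2' Walk.nil) : G.Walk root w).IsPath := by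
      simp [Walk.cons_isPath_iff, h2'.ne, h2.ne, hwroot.symm]
    have hp₂ : (Walk.cons h (Walk.cons h' (Walk.cons hvw Walk.nil)) :
        G.Walk root w).IsPath := by
      simp [Walk.cons_isPath_iff, hvw.ne, hcv, hcw, hrootc, hrootv, hwroot.symm]
    have heq := (huniq root w).unique hp₁ hp₂
    have := congrArg Walk.length heq
    simp at this

omit [DecidableEq V] in
lemma aux_no_triangle (hG : G.IsTree) {root c l : V}
    (h1 : G.Adj root c) (h2 : G.Adj c l) (h3 : G.Adj root l) : False := by
  have huniq := hG.existsUnique_path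
  have hp₁ : (Walk.cons h3 Walk.nil : G.Walk root l).IsPath := by
    simp [Walk.cons_isPath_iff, h3.ne]
  have hp₂ : (Walk.cons h1 (Walk.cons h2 Walk.nil) : G.Walk root l).IsPath := by
    simp [Walk.cons_isPath_iff, h1.ne, h2.ne, h3.ne]
  have heq := (huniq root l).unique hp₁ hp₂
  have := congrArg Walk.length heq
  simp at this

lemma aux_spectral [Fintype V] [DecidableRel G.Adj] (hG : G.IsTree) {root : V}
    (hh : ∀ v, G.dist root v ≤ 2) {ν : ℝ} (hirr : ∀ z : ℤ, (z : ℝ) ≠ ν ^ 2)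
    {y : V → ℝ} (hy : y ≠ 0) (heig : (G.adjMatrix ℝ).mulVec y = ν • y) :
    ∑ c ∈ G.neighborFinset root,
      (1 : ℝ) / (ν ^ 2 - (((G.neighborFinset c).erase root).card : ℝ)) = 1 := by
  have hν : ν ≠ 0 := by
    intro h; exact hirr 0 (by simp [h])
  have heq : ∀ v, ν * y v = ∑ u ∈ G.neighborFinset v, y u := by
    intro v
    have := congrFun heig v
    rw [SimpleGraph.adjMatrix_mulVec_apply] at this
    simpa [Pi.smul_apply, smul_eq_mul] using this.symm
  have hfar : ∀ v, v ≠ root → ¬ G.Adj root v → ∀ c, G.Adj c v →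
      (∀ w, G.Adj v w → w = c) → ν * y v = y c := by
    intro v hv hnadj c hcv huni
    have : G.neighborFinset v = {c} := by
      ext u
      simp only [SimpleGraph.mem_neighborFinset, Finset.mem_singleton]
      exact ⟨fun h => huni u h, fun h => h ▸ hcv.symm⟩
    rw [heq v, this, Finset.sum_singleton]
  have hcent : ∀ c, G.Adj root c →
      (ν ^ 2 - (((G.neighborFinset c).erase root).card : ℝ)) * y c = ν * y root := by
    intro c hc
    have hmem : root ∈ G.neighborFinset c := by
      rw [SimpleGraph.mem_neighborFinset]; exact hc.symm
    have hleaf : ∀ l ∈ (G.neighborFinset c).erase root, ν * y l = y c := by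
      intro l hl
      obtain ⟨hlroot, hladj⟩ := Finset.mem_erase.mp hl
      rw [SimpleGraph.mem_neighborFinset] at hladj
      have hnadj : ¬ G.Adj root l := fun h3 => aux_no_triangle hG hc hladj h3
      obtain ⟨c', h1, h2, h3⟩ := aux_far_vertex hG hh hlroot hnadj
      have : c' = c := (h3 c hladj.symm).symm
      exact this ▸ hfar l hlroot hnadj c' h2 h3
    have e1 : ν * y c = y root + ∑ l ∈ (G.neighborFinset c).erase root, y l := by
      rw [heq c, ← Finset.add_sum_erase _ _ hmem]
    have e2 : ν * (ν * y c) = ν * y root +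
        (((G.neighborFinset c).erase root).card : ℝ) * y c := by
      rw [e1, mul_add, Finset.mul_sum]
      congr 1
      rw [Finset.sum_congr rfl hleaf, Finset.sum_const, nsmul_eq_mul]
    ring_nf
    ring_nf at e2
    linarith
  have hkey : ∀ c, G.Adj root c →
      (ν ^ 2 - (((G.neighborFinset c).erase root).card : ℝ)) ≠ 0 := by
    intro c _
    intro h
    exact hirr (((G.neighborFinset c).erase root).card : ℤ) (by push_cast; linarith)
  have hroot : y root ≠ 0 := by
    intro h0
    apply hy
    funext v
    have hcenter : ∀ c, G.Adj root c → y c = 0 := by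
      intro c hc
      have := hcent c hc
      rw [h0, mul_zero] at this
      exact (mul_eq_zero.mp this).resolve_left (hkey c hc)
    rcases eq_or_ne v root with rfl | hv
    · exact h0
    · by_cases hadj : G.Adj root v
      · exact hcenter v hadj
      · obtain ⟨c, h1, h2, h3⟩ := aux_far_vertex hG hh hv hadj
        have := hfar v hv hadj c h2 h3
        rw [hcenter c h1] at this
        simpa [hν] using (mul_eq_zero.mp this).resolve_left hν
  have e3 : ∑ u ∈ G.neighborFinset root, y u = ∑ c ∈ G.neighborFinset root,
      ν * y root * (1 / (ν ^ 2 - (((G.neighborFinset c).erase root).card : ℝ))) := by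
    refine Finset.sum_congr rfl fun c hc => ?_
    rw [SimpleGraph.mem_neighborFinset] at hc
    have h1 := hcent c hc
    have h2 := hkey c hc
    rw [mul_one_div, eq_div_iff h2]
    linear_combination h1
  have hrooteq : ν * y root = ν * y root * ∑ c ∈ G.neighborFinset root,
      (1 : ℝ) / (ν ^ 2 - (((G.neighborFinset c).erase root).card : ℝ)) := by
    have h4 := heq root
    rw [e3, ← Finset.mul_sum] at h4
    exact h4
  exact (mul_left_cancel₀ (mul_ne_zero hν hroot) (by rw [mul_one]; exact hrooteq.symm))

end AuxGraph

lemma aux_eval_charpoly {n : Type*} [Fintype n] [DecidableEq n] {R : Type*} [CommRing R]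
    (M : Matrix n n R) (t : R) :
    (M.charpoly).eval t = (t • (1 : Matrix n n R) - M).det := by
  rw [Matrix.charpoly, ← Polynomial.coe_evalRingHom, RingHom.map_det]
  congr 1
  ext i j
  by_cases h : i = j <;>
    simp [Matrix.charmatrix_apply, Matrix.diagonal_apply, Matrix.one_apply, h]

lemma aux_adj_map {V : Type*} [Fintype V] [DecidableEq V] (G : SimpleGraph V)
    [DecidableRel G.Adj] :
    G.adjMatrix ℝ = (G.adjMatrix ℚ).map (algebraMap ℚ ℝ) := by
  ext v w
  simp [Matrix.map_apply, SimpleGraph.adjMatrix_apply, apply_ite (algebraMap ℚ ℝ)]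

lemma aux_eigen {V : Type*} [Fintype V] [DecidableEq V] (G : SimpleGraph V)
    [DecidableRel G.Adj] {lam ρ : ℝ} {x : V → ℝ} (hx : x ≠ 0)
    (heig : (G.adjMatrix ℝ).mulVec x = lam • x)
    (hρ : Polynomial.aeval ρ (minpoly ℚ lam) = 0) :
    ∃ y : V → ℝ, y ≠ 0 ∧ (G.adjMatrix ℝ).mulVec y = ρ • y := by
  set A : Matrix V V ℝ := G.adjMatrix ℝ with hA
  set ch : ℚ[X] := (G.adjMatrix ℚ).charpoly with hch
  have hmapch : ch.map (algebraMap ℚ ℝ) = A.charpoly := by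
    rw [hA, aux_adj_map, Matrix.charpoly_map]
  have hdet : ((lam • (1 : Matrix V V ℝ) - A)).det = 0 := by
    rw [← Matrix.exists_mulVec_eq_zero_iff]
    refine ⟨x, hx, ?_⟩
    rw [Matrix.sub_mulVec, Matrix.smul_mulVec, Matrix.one_mulVec, heig, sub_self]
  have hlamroot : Polynomial.aeval lam ch = 0 := by
    rw [Polynomial.aeval_def, ← Polynomial.eval_map, hmapch, aux_eval_charpoly, hdet]
  have hdvd : minpoly ℚ lam ∣ ch := minpoly.dvd ℚ lam hlamroot
  have hρroot : Polynomial.aeval ρ ch = 0 := by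
    obtain ⟨g, hg⟩ := hdvd
    rw [hg, map_mul, hρ, zero_mul]
  have hdetρ : ((ρ • (1 : Matrix V V ℝ) - A)).det = 0 := by
    have h1 : Polynomial.eval ρ (ch.map (algebraMap ℚ ℝ)) = 0 := by
      rw [Polynomial.eval_map, ← Polynomial.aeval_def]; exact hρroot
    rw [hmapch, aux_eval_charpoly] at h1
    exact h1
  obtain ⟨y, hy0, hy⟩ := Matrix.exists_mulVec_eq_zero_iff.mpr hdetρ
  refine ⟨y, hy0, ?_⟩
  rw [Matrix.sub_mulVec, Matrix.smul_mulVec, Matrix.one_mulVec, sub_eq_zero] at hy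
  exact hy.symm

lemma aux_conj_root (lam : ℝ) (hint : IsIntegral ℤ lam) {t : ℝ} (ht0 : 0 < t)
    (ht : Polynomial.aeval t (minpoly ℚ (lam ^ 2)) = 0) :
    ∃ ρ : ℝ, ρ ^ 2 = t ∧ Polynomial.aeval ρ (minpoly ℚ lam) = 0 := by
  have hQlam : IsIntegral ℚ lam := hint.tower_top
  have hQsq : IsIntegral ℚ (lam ^ 2) := hQlam.pow 2
  set Q : ℚ[X] := minpoly ℚ (lam ^ 2) with hQ
  haveI : Fact (Irreducible Q) := ⟨minpoly.irreducible hQsq⟩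
  set K := AdjoinRoot Q with hK
  let φ : K →ₐ[ℚ] ℝ := AdjoinRoot.liftAlgHom Q (Algebra.ofId ℚ ℝ) (lam ^ 2) (minpoly.aeval ℚ (lam ^ 2))
  have htC : Polynomial.aeval ((t : ℂ)) Q = 0 := by
    rw [show ((t:ℝ) : ℂ) = algebraMap ℝ ℂ t from rfl, Polynomial.aeval_algebraMap_apply, ht,
      map_zero]
  let ψ : K →ₐ[ℚ] ℂ := AdjoinRoot.liftAlgHom Q (Algebra.ofId ℚ ℂ) ((t : ℂ)) htC
  letI : Algebra K ℝ := φ.toRingHom.toAlgebra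
  haveI : IsScalarTower ℚ K ℝ := IsScalarTower.of_algebraMap_eq fun q => (φ.commutes q).symm
  have hKlam : IsIntegral K lam := hQlam.tower_top
  set m : K[X] := minpoly K lam with hm
  have hmmonic : m.Monic := minpoly.monic hKlam
  have hmdeg : 0 < m.natDegree := minpoly.natDegree_pos hKlam
  have halgmap : algebraMap K ℝ = φ.toRingHom := rfl
  have hm1 : m ∣ X ^ 2 - C (AdjoinRoot.root Q) := by
    apply minpoly.dvd
    rw [map_sub, map_pow, Polynomial.aeval_X, Polynomial.aeval_C, halgmap]
    show lam ^ 2 - φ (AdjoinRoot.root Q) = 0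
    rw [show φ (AdjoinRoot.root Q) = lam ^ 2 from AdjoinRoot.liftAlgHom_root _ _ _ _, sub_self]
  have hm2 : m ∣ (minpoly ℚ lam).map (algebraMap ℚ K) := by
    apply minpoly.dvd
    rw [Polynomial.aeval_map_algebraMap]
    exact minpoly.aeval ℚ lam
  obtain ⟨c, hc⟩ : ∃ c : ℂ, (m.map ψ.toRingHom).IsRoot c := by
    apply IsAlgClosed.exists_root
    rw [Polynomial.degree_map_eq_of_injective (RingHom.injective ψ.toRingHom)]
    intro h
    have : m.natDegree = 0 := Polynomial.natDegree_eq_zero_iff_degree_le_zero.mpr (le_of_eq h)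
    omega
  have hψroot : ψ.toRingHom (AdjoinRoot.root Q) = (t : ℂ) :=
    AdjoinRoot.liftAlgHom_root Q _ _ htC
  have hd1 : (m.map ψ.toRingHom) ∣ (X ^ 2 - C ((t : ℂ))) := by
    have hdvd := Polynomial.map_dvd ψ.toRingHom hm1
    rwa [Polynomial.map_sub, Polynomial.map_pow, Polynomial.map_X, Polynomial.map_C,
      hψroot] at hdvd
  have hd2 : (m.map ψ.toRingHom) ∣ (minpoly ℚ lam).map (algebraMap ℚ ℂ) := by
    have hdvd := Polynomial.map_dvd ψ.toRingHom hm2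
    have hcomp : ψ.toRingHom.comp (algebraMap ℚ K) = algebraMap ℚ ℂ := AlgHom.comp_algebraMap ψ
    rwa [Polynomial.map_map, hcomp] at hdvd
  have h0 : Polynomial.eval c (X ^ 2 - C ((t : ℂ))) = 0 := by
    obtain ⟨g, hg⟩ := hd1
    rw [hg, Polynomial.eval_mul, hc.eq_zero, zero_mul]
  have hP : Polynomial.eval c ((minpoly ℚ lam).map (algebraMap ℚ ℂ)) = 0 := by
    obtain ⟨g, hg⟩ := hd2
    rw [hg, Polynomial.eval_mul, hc.eq_zero, zero_mul]
  have hc2 : c ^ 2 = (t : ℂ) := by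
    have := h0
    simp only [Polynomial.eval_sub, Polynomial.eval_pow, Polynomial.eval_X,
      Polynomial.eval_C, sub_eq_zero] at this
    exact this
  have e1 : c.re * c.im + c.im * c.re = 0 := by
    have := congrArg Complex.im hc2
    simpa [sq, Complex.mul_im] using this
  have e2 : c.re * c.re - c.im * c.im = t := by
    have := congrArg Complex.re hc2
    simpa [sq, Complex.mul_re] using this
  have hb : c.im = 0 := by
    rcases mul_eq_zero.mp (by linarith : c.re * c.im = 0) with ha | hb
    · exfalso; rw [ha] at e2; nlinarith [mul_self_nonneg c.im]
    · exact hb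
  refine ⟨c.re, by nlinarith, ?_⟩
  have hcast : (algebraMap ℝ ℂ) c.re = c := by
    apply Complex.ext <;> simp [hb]
  have hval : algebraMap ℝ ℂ (Polynomial.aeval c.re (minpoly ℚ lam)) = 0 := by
    rw [← Polynomial.aeval_algebraMap_apply, hcast, Polynomial.aeval_def,
      ← Polynomial.eval_map]
    exact hP
  exact (map_eq_zero_iff _ (algebraMap ℝ ℂ).injective).mp hval

lemma aux_irrational {s : ℝ} (hs : IsIntegral ℚ s) {n : ℕ} (hn : 2 ≤ n)
    (hdeg : (minpoly ℚ s).natDegree = n) {t : ℝ}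
    (ht : Polynomial.aeval t (minpoly ℚ s) = 0) (z : ℤ) : (z : ℝ) ≠ t := by
  intro hzt
  have h1 : Polynomial.aeval ((z : ℚ)) (minpoly ℚ s) = 0 := by
    have : algebraMap ℚ ℝ ((z : ℚ)) = t := by rw [← hzt]; simp
    have h2 : algebraMap ℚ ℝ (Polynomial.aeval ((z : ℚ)) (minpoly ℚ s)) = 0 := by
      rw [← Polynomial.aeval_algebraMap_apply, this, ht]
    exact (map_eq_zero_iff _ (algebraMap ℚ ℝ).injective).mp h2
  have hdvd : X - C ((z : ℚ)) ∣ minpoly ℚ s := Polynomial.dvd_iff_isRoot.mpr h1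
  obtain ⟨e, he⟩ := hdvd
  rcases (minpoly.irreducible hs).isUnit_or_isUnit he with hu | hu
  · exact (Polynomial.not_isUnit_X_sub_C _) hu
  · have h3 : (minpoly ℚ s).natDegree =
        (X - C ((z : ℚ))).natDegree + e.natDegree := by
      rw [he, Polynomial.natDegree_mul (Polynomial.X_sub_C_ne_zero _) hu.ne_zero]
    rw [Polynomial.natDegree_X_sub_C, Polynomial.natDegree_eq_zero_of_isUnit hu, hdeg] at h3
    omega

/-- Interlacing obstruction: if a totally real algebraic integer `lam`
(with `lam² ∉ ℤ`, `n = [ℚ(lam²):ℚ] ≥ 2`, and conjugates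
`0 < μ 0 < ⋯ < μ (n-1)` of `lam²`) is an eigenvalue of the adjacency
matrix of a rooted tree of height `≤ 2`, then between any two consecutive
conjugates of `lam²` there is a positive integer. -/
theorem stmt10 (lam : ℝ) (hint : IsIntegral ℤ lam)
    (htr : ((minpoly ℚ lam).map (algebraMap ℚ ℝ)).Splits)
    (hsq : ∀ z : ℤ, (z : ℝ) ≠ lam ^ 2)
    (n : ℕ) (hn : 2 ≤ n) (hdeg : (minpoly ℚ (lam ^ 2)).natDegree = n)
    (μ : Fin n → ℝ) (hμmono : StrictMono μ) (hμpos : ∀ i, 0 < μ i)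
    (hμroots : ∀ i, Polynomial.aeval (μ i) (minpoly ℚ (lam ^ 2)) = 0)
    (V : Type*) [Fintype V] [DecidableEq V]
    (G : SimpleGraph V) [DecidableRel G.Adj] (hG : G.IsTree)
    (root : V) (hheight : ∀ v : V, G.dist root v ≤ 2)
    (x : V → ℝ) (hx : x ≠ 0)
    (heig : (G.adjMatrix ℝ).mulVec x = lam • x) :
    ∀ i j : Fin n, (i : ℕ) + 1 = (j : ℕ) →
      ∃ k : ℤ, 0 < k ∧ μ i < (k : ℝ) ∧ (k : ℝ) < μ j := by
  intro i j hij
  by_contra hcon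
  push_neg at hcon
  have hμij : μ i < μ j := hμmono (by rw [Fin.lt_def]; omega)
  have hQsq : IsIntegral ℚ (lam ^ 2) := (hint.tower_top (A := ℚ)).pow 2
  have hirr : ∀ (i : Fin n) (z : ℤ), (z : ℝ) ≠ μ i := fun i z =>
    aux_irrational hQsq hn hdeg (hμroots i) z
  -- eigenvalue for μ i and μ j
  have key : ∀ (i : Fin n), ∑ c ∈ G.neighborFinset root,
      (1 : ℝ) / (μ i - (((G.neighborFinset c).erase root).card : ℝ)) = 1 := by
    intro i
    obtain ⟨ρ, hρ2, hρroot⟩ := aux_conj_root lam hint (hμpos i) (hμroots i)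
    obtain ⟨y, hy0, hyeig⟩ := aux_eigen G hx heig hρroot
    have hirrρ : ∀ z : ℤ, (z : ℝ) ≠ ρ ^ 2 := by
      intro z; rw [hρ2]; exact hirr i z
    have := aux_spectral hG hheight hirrρ hy0 hyeig
    rw [hρ2] at this
    exact this
  have h1 := key i
  have h2 := key j
  rcases Finset.eq_empty_or_nonempty (G.neighborFinset root) with he | hne
  · rw [he] at h1; simp at h1
  · have hlt : ∑ c ∈ G.neighborFinset root,
        (1 : ℝ) / (μ j - (((G.neighborFinset c).erase root).card : ℝ)) <
        ∑ c ∈ G.neighborFinset root,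
        (1 : ℝ) / (μ i - (((G.neighborFinset c).erase root).card : ℝ)) := by
      apply Finset.sum_lt_sum_of_nonempty hne
      intro c _
      set k : ℝ := (((G.neighborFinset c).erase root).card : ℝ) with hk
      have hkz : k = ((((G.neighborFinset c).erase root).card : ℤ) : ℝ) := by push_cast; rfl
      by_cases hklt : k < μ i
      · exact one_div_lt_one_div_of_lt (by linarith) (by linarith)
      · push_neg at hklt
        have hki : μ i < k := lt_of_le_of_ne hklt (Ne.symm (by rw [hkz]; exact (hirr i _)))
        have hkpos : (0 : ℝ) < k := lt_trans (hμpos i) hki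
        have hkj : μ j ≤ k := by
          have := hcon ((((G.neighborFinset c).erase root).card : ℤ))
          rw [← hkz] at this
          have hkpos' : (0 : ℤ) < ((((G.neighborFinset c).erase root).card : ℤ)) := by
            rw [hkz] at hkpos; exact_mod_cast hkpos
          exact this hkpos' hki
        have hkj' : μ j < k := lt_of_le_of_ne hkj (Ne.symm (by rw [hkz]; exact (hirr j _)))
        rw [one_div_lt_one_div_of_neg (by linarith) (by linarith)]
        linarith
    rw [h1, h2] at hlt
    exact lt_irrefl 1 hlt
end

section
/- There do not exist nonnegative integers a₀, a₁, a₂, … (almost all zero) such that Σₖ aₖ/(λ² − k) = 1, where λ = 2cos(2π/7). -/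
open Polynomial

private lemma deg_cubic14 : (X^3 + X^2 + 1 : (ZMod 2)[X]).natDegree = 3 := by compute_degree!

private lemma irr_cubic14 : Irreducible ((X^3 + X^2 + 1 : (ZMod 2)[X])) := by
  rw [Polynomial.irreducible_iff_roots_eq_zero_of_degree_le_three (by rw [deg_cubic14]; omega)
    (by rw [deg_cubic14])]
  rw [Multiset.eq_zero_iff_forall_notMem]
  intro x hx
  rw [mem_roots (by intro h; have := congrArg natDegree h; rw [deg_cubic14] at this; simp at this)]
    at hx
  simp only [IsRoot, eval_add, eval_pow, eval_X, eval_one] at hx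
  revert hx; revert x; decide

private lemma lam_cubic14 (lam : ℝ) (hlam : lam = 2 * Real.cos (2 * Real.pi / 7)) :
    lam^3 + lam^2 - 2*lam - 1 = 0 := by
  set z : ℂ := Complex.exp ((2 * Real.pi / 7 : ℝ) * Complex.I) with hz
  have hz7 : z ^ 7 = 1 := by
    rw [hz, ← Complex.exp_nat_mul]
    have h7 : ((7:ℕ):ℂ) * (((2 * Real.pi / 7 : ℝ):ℂ) * Complex.I)
        = 2 * (Real.pi:ℂ) * Complex.I := by push_cast; ring
    rw [h7, Complex.exp_two_pi_mul_I]
  have hz1 : z ≠ 1 := by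
    intro h
    rw [hz, Complex.exp_eq_one_iff] at h
    obtain ⟨n, hn⟩ := h
    have h' : (((2 * Real.pi / 7 : ℝ)):ℂ) * Complex.I = ((n:ℂ) * (2 * Real.pi)) * Complex.I := by
      rw [hn]; ring
    have hI := mul_right_cancel₀ Complex.I_ne_zero h'
    have hr : (2 * Real.pi / 7 : ℝ) = n * (2 * Real.pi) := by exact_mod_cast hI
    have hpi := Real.pi_pos
    rcases le_or_gt n 0 with h' | h'
    · have : (n:ℝ) ≤ 0 := by exact_mod_cast h'
      nlinarith
    · have : (1:ℝ) ≤ (n:ℝ) := by exact_mod_cast h'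
      nlinarith
  have hzne : z ≠ 0 := Complex.exp_ne_zero _
  have hsum : z^6 + z^5 + z^4 + z^3 + z^2 + z + 1 = 0 := by
    have h := sub_eq_zero.mpr hz7
    have hfac : (z - 1) * (z^6 + z^5 + z^4 + z^3 + z^2 + z + 1) = 0 := by
      linear_combination h
    rcases mul_eq_zero.mp hfac with h' | h'
    · exact absurd (sub_eq_zero.mp h') hz1
    · exact h'
  have hcos : (lam : ℂ) = z + z⁻¹ := by
    rw [hlam, hz, ← Complex.exp_neg]
    push_cast
    rw [Complex.two_cos]
    ring_nf
  have key : (lam:ℂ)^3 + (lam:ℂ)^2 - 2*(lam:ℂ) - 1 = 0 := by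
    rw [hcos]
    field_simp
    linear_combination hsum
  exact_mod_cast key

/-- `lam = 2cos(2π/7)` does not satisfy the arboreal-height-2 criterion:
there is no finitely supported family of naturals with `∑ₖ aₖ/(lam² − k) = 1`. -/
theorem stmt14 (lam : ℝ) (hlam : lam = 2 * Real.cos (2 * Real.pi / 7)) :
    ¬ ∃ a : ℕ →₀ ℕ, (a.sum fun k ak => (ak : ℝ) / (lam ^ 2 - (k : ℝ))) = 1 := by
  rintro ⟨a, ha⟩
  have hlam3 := lam_cubic14 lam hlam
  have hmu : (lam^2)^3 - 5*(lam^2)^2 + 6*(lam^2) - 1 = 0 := by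
    linear_combination (lam^3 - lam^2 - 2*lam + 1) * hlam3
  -- lam² is never a natural number
  have hne : ∀ k : ℕ, lam^2 - (k:ℝ) ≠ 0 := by
    intro k h
    have hk : (k:ℝ) = lam^2 := by linarith
    have hZ : (k:ℤ)^3 - 5*(k:ℤ)^2 + 6*(k:ℤ) - 1 = 0 := by
      have : ((k:ℝ))^3 - 5*((k:ℝ))^2 + 6*((k:ℝ)) - 1 = 0 := by rw [hk]; linarith [hmu]
      exact_mod_cast this
    rcases Nat.even_or_odd k with ⟨j, hj⟩ | ⟨j, hj⟩
    · have hjZ : (k:ℤ) = 2*(j:ℤ) := by exact_mod_cast congrArg (Nat.cast : ℕ → ℤ) (by omega : k = 2*j)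
      rw [hjZ] at hZ
      have h4 : 4*(2*(j:ℤ)^3 - 5*(j:ℤ)^2 + 3*(j:ℤ)) - 1 = 0 := by linear_combination hZ
      omega
    · have hjZ : (k:ℤ) = 2*(j:ℤ) + 1 := by exact_mod_cast congrArg (Nat.cast : ℕ → ℤ) hj
      rw [hjZ] at hZ
      have h4 : 2*(4*(j:ℤ)^3 - 4*(j:ℤ)^2 - (j:ℤ)) + 1 = 0 := by linear_combination hZ
      omega
  set S := a.support with hS
  -- clear denominators in the real identity
  have hprod : ∑ k ∈ S, (a k : ℝ) * ∏ j ∈ S.erase k, (lam^2 - (j:ℝ))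
      = ∏ k ∈ S, (lam^2 - (k:ℝ)) := by
    have ha' : ∑ k ∈ S, (a k : ℝ) / (lam^2 - (k:ℝ)) = 1 := ha
    calc ∑ k ∈ S, (a k : ℝ) * ∏ j ∈ S.erase k, (lam^2 - (j:ℝ))
        = ∑ k ∈ S, ((a k : ℝ) / (lam^2 - (k:ℝ))) * ∏ j ∈ S, (lam^2 - (j:ℝ)) := by
          refine Finset.sum_congr rfl fun k hk => ?_
          rw [← Finset.mul_prod_erase S _ hk]
          rw [div_mul_eq_mul_div, eq_div_iff (hne k)]
          ring
      _ = (∑ k ∈ S, (a k : ℝ) / (lam^2 - (k:ℝ))) * ∏ j ∈ S, (lam^2 - (j:ℝ)) := by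
          rw [Finset.sum_mul]
      _ = ∏ k ∈ S, (lam^2 - (k:ℝ)) := by rw [ha', one_mul]
  -- the integer polynomial annihilating lam²
  set Q : ℤ[X] := (∏ k ∈ S, (X - C (k:ℤ)))
      - ∑ k ∈ S, C (a k : ℤ) * ∏ j ∈ S.erase k, (X - C (j:ℤ)) with hQ
  have hQev : aeval (lam^2 : ℝ) Q = 0 := by
    rw [hQ]
    simp only [map_sub, map_sum, map_prod, map_mul, aeval_X, aeval_C, algebraMap_int_eq,
      eq_intCast, map_intCast, map_natCast, Int.cast_natCast]
    rw [sub_eq_zero]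
    exact hprod.symm
  set m : ℤ[X] := X^3 + C (-5) * X^2 + C 6 * X + C (-1) with hm
  have hmonic : m.Monic := by rw [hm]; monicity!
  have hmev : aeval (lam^2 : ℝ) m = 0 := by
    rw [hm]
    simp only [map_add, map_mul, map_pow, aeval_X, aeval_C, algebraMap_int_eq, eq_intCast,
      map_intCast, map_ofNat, map_neg, map_one, Int.cast_neg, Int.cast_ofNat, Int.cast_one]
    linear_combination hmu
  have hint : IsIntegral ℤ (lam^2 : ℝ) := ⟨m, hmonic, hmev⟩
  have hmmap : m.map (Int.castRingHom (ZMod 2)) = X^3 + X^2 + 1 := by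
    rw [hm]
    simp only [Polynomial.map_add, Polynomial.map_mul, Polynomial.map_pow, Polynomial.map_X,
      map_C]
    rw [show ((Int.castRingHom (ZMod 2)) (-5) : ZMod 2) = 1 from by decide,
      show ((Int.castRingHom (ZMod 2)) 6 : ZMod 2) = 0 from by decide,
      show ((Int.castRingHom (ZMod 2)) (-1) : ZMod 2) = 1 from by decide]
    rw [map_one, map_zero]
    ring
  have hmirr : Irreducible m :=
    hmonic.irreducible_of_irreducible_map (Int.castRingHom (ZMod 2)) m (hmmap ▸ irr_cubic14)
  -- m divides Q over ℤ
  have hmQ : m ∣ Q := by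
    have h1 : minpoly ℤ (lam^2:ℝ) ∣ m := minpoly.isIntegrallyClosed_dvd hint hmev
    have h2 : minpoly ℤ (lam^2:ℝ) ∣ Q := minpoly.isIntegrallyClosed_dvd hint hQev
    obtain ⟨c, hc⟩ := h1
    rcases hmirr.isUnit_or_isUnit hc with h | h
    · exact absurd h (Polynomial.not_isUnit_of_natDegree_pos _ (minpoly.natDegree_pos hint))
    · obtain ⟨u, rfl⟩ := h
      have : m * ↑u⁻¹ = minpoly ℤ (lam^2:ℝ) := by
        rw [hc]; rw [mul_assoc, Units.mul_inv, mul_one]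
      exact (dvd_trans ⟨↑u⁻¹, this.symm⟩ h2)
  -- move to the finite field of 8 elements
  haveI : Fact (Irreducible (X^3 + X^2 + 1 : (ZMod 2)[X])) := ⟨irr_cubic14⟩
  set K := AdjoinRoot (X^3 + X^2 + 1 : (ZMod 2)[X]) with hK
  set β : K := AdjoinRoot.root _ with hβdef
  have hβ : β^3 + β^2 + 1 = 0 := by
    have h0 : (aeval β) (X^3 + X^2 + 1 : (ZMod 2)[X]) = 0 := by
      rw [hβdef, AdjoinRoot.aeval_eq, AdjoinRoot.mk_self]
    simpa using h0
  have h2K : (2:K) = 0 := by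
    calc (2:K) = algebraMap (ZMod 2) K 2 := (map_ofNat _ 2).symm
      _ = algebraMap (ZMod 2) K 0 := by rw [show (2:ZMod 2) = 0 from by decide]
      _ = 0 := map_zero _
  have hβ0 : β ≠ 0 := by
    intro h; rw [h] at hβ; simp at hβ
  have hβ1 : β - 1 ≠ 0 := by
    intro h
    have hb : β = 1 := by linear_combination h
    rw [hb] at hβ
    have : (1:K) = 0 := by linear_combination hβ - h2K
    exact one_ne_zero this
  have hcast : ∀ k : ℕ, (k:K) = if Even k then 0 else 1 := by
    intro k
    rcases Nat.even_or_odd k with he | ho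
    · obtain ⟨j, hj⟩ := he
      rw [if_pos ⟨j, hj⟩, hj]
      push_cast
      linear_combination (j:K) * h2K
    · obtain ⟨j, hj⟩ := ho
      rw [if_neg (Nat.not_even_iff_odd.mpr ⟨j, hj⟩), hj]
      rw [Nat.cast_add, Nat.cast_mul]
      push_cast
      linear_combination (j:K) * h2K
  have hkey : ∀ k : ℕ, (β - 1 + (k:K)) * (β - (k:K)) = β * (β - 1) := by
    intro k
    rw [hcast k]
    split_ifs <;> ring
  have hne2 : ∀ k : ℕ, β - (k:K) ≠ 0 := by
    intro k h
    have := hkey k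
    rw [h, mul_zero] at this
    rcases mul_eq_zero.mp this.symm with h' | h'
    · exact hβ0 h'
    · exact hβ1 h'
  -- evaluate Q at β
  have hQβ : aeval β Q = 0 := by
    obtain ⟨d, hd⟩ := hmQ
    have hmβ : aeval β m = 0 := by
      rw [hm]
      simp only [map_add, map_mul, map_pow, aeval_X, aeval_C, algebraMap_int_eq, eq_intCast,
        map_intCast, map_ofNat, map_neg, map_one, Int.cast_neg, Int.cast_ofNat, Int.cast_one]
      linear_combination hβ - (3 * β^2 - 3 * β + 1) * h2K
    rw [hd, map_mul, hmβ, zero_mul]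
  have hKeq : ∑ k ∈ S, (a k : K) * ∏ j ∈ S.erase k, (β - (j:K))
      = ∏ k ∈ S, (β - (k:K)) := by
    rw [hQ] at hQβ
    simp only [map_sub, map_sum, map_prod, map_mul, aeval_X, aeval_C, algebraMap_int_eq,
      eq_intCast, map_intCast, map_natCast, Int.cast_natCast] at hQβ
    linear_combination -hQβ
  have hP0 : (∏ k ∈ S, (β - (k:K))) ≠ 0 :=
    Finset.prod_ne_zero_iff.mpr (fun k _ => hne2 k)
  have hstep : (∑ k ∈ S, (a k : K) * (β - 1 + (k:K))) * (∏ k ∈ S, (β - (k:K)))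
      = (β*(β-1)) * ∏ k ∈ S, (β - (k:K)) := by
    rw [Finset.sum_mul]
    have hterm : ∀ k ∈ S, (a k : K) * (β - 1 + (k:K)) * ∏ j ∈ S, (β - (j:K))
        = (β*(β-1)) * ((a k : K) * ∏ j ∈ S.erase k, (β - (j:K))) := by
      intro k hk
      rw [← Finset.mul_prod_erase S _ hk]
      linear_combination ((a k : K) * (∏ j ∈ S.erase k, (β - (j:K)))) * hkey k
    rw [Finset.sum_congr rfl hterm, ← Finset.mul_sum, hKeq]
  have hfin : ∑ k ∈ S, (a k : K) * (β - 1 + (k:K)) = β*(β-1) :=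
    mul_right_cancel₀ hP0 hstep
  have hsplit : ∑ k ∈ S, (a k : K) * (β - 1 + (k:K))
      = ((∑ k ∈ S, a k : ℕ) : K) * (β-1) + ((∑ k ∈ S, a k * k : ℕ) : K) := by
    rw [Nat.cast_sum, Nat.cast_sum]
    rw [Finset.sum_mul, ← Finset.sum_add_distrib]
    refine Finset.sum_congr rfl fun k hk => by rw [Nat.cast_mul]; ring
  set N : ℕ := ∑ k ∈ S, a k with hN
  set M : ℕ := ∑ k ∈ S, a k * k with hM
  have hrel : β^2 - β - ((N:K)) * (β - 1) - (M:K) = 0 := by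
    rw [hsplit] at hfin
    linear_combination -hfin
  set p : (ZMod 2)[X] := X^2 - X - C ((N : ZMod 2)) * (X - 1) - C ((M : ZMod 2)) with hp
  have hpmon : p.Monic := by rw [hp]; monicity!
  have hpev : aeval β p = 0 := by
    rw [hp]
    simp only [map_sub, map_mul, aeval_X, aeval_C, map_pow, map_one]
    rw [map_natCast (algebraMap (ZMod 2) K) N, map_natCast (algebraMap (ZMod 2) K) M]
    linear_combination hrel
  have hcmon : (X^3 + X^2 + 1 : (ZMod 2)[X]).Monic := by monicity!
  have hdvd3 : (X^3 + X^2 + 1 : (ZMod 2)[X]) ∣ p := by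
    have hmp : minpoly (ZMod 2) β ∣ p := minpoly.dvd _ _ hpev
    rw [hβdef, AdjoinRoot.minpoly_root (irr_cubic14.ne_zero)] at hmp
    rwa [hcmon.leadingCoeff, inv_one, map_one, mul_one] at hmp
  have hle := Polynomial.natDegree_le_of_dvd hdvd3 hpmon.ne_zero
  rw [deg_cubic14] at hle
  have hp2 : p.natDegree ≤ 2 := by rw [hp]; compute_degree
  omega
end

section
/- Let λ be a totally real algebraic integer with λ² ∉ ℤ. Then there exists a positive integer D and nonnegative integers a₀, a₁, … (almost all zero) such that Σₖ aₖ/((Dλ)² − k) = 1. -/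
open Polynomial

private lemma coeff_comp_negX' {R : Type*} [CommRing R] (p : R[X]) (k : ℕ) :
    (p.comp (-X)).coeff k = (-1)^k * p.coeff k := by
  have hC : ∀ n : ℕ, ((-1 : R[X]))^n = C ((-1:R)^n) := by
    intro n; rw [map_pow, map_neg, map_one]
  induction p using Polynomial.induction_on' with
  | add p q hp hq => simp [add_comp, hp, hq, mul_add]
  | monomial n a =>
      rw [monomial_comp, neg_pow, hC, mul_comm (C ((-1:R)^n)) (X^n), ← mul_assoc,
        mul_comm (C a) (X^n), mul_assoc, ← C_mul, coeff_mul_C, coeff_X_pow, coeff_monomial]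
      rcases eq_or_ne n k with rfl | h
      · simp [mul_comm]
      · simp [h, h.symm]

private lemma even_decomp' (S : ℚ[X]) (h : S.comp (-X) = S) :
    expand ℚ 2 (Polynomial.contract 2 S) = S := by
  have hodd : ∀ k, ¬ (2:ℕ) ∣ k → S.coeff k = 0 := by
    intro k hk
    have := coeff_comp_negX' S k
    rw [h, Odd.neg_one_pow (Nat.odd_iff.mpr (by omega))] at this
    linarith
  ext k
  rw [coeff_expand (by norm_num)]
  split_ifs with hd
  · obtain ⟨j, rfl⟩ := hd
    rw [Polynomial.coeff_contract (two_ne_zero), Nat.mul_div_cancel_left _ (by norm_num),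
      mul_comm]
  · exact (hodd k hd).symm

private lemma sum_interlace' {n : ℕ} (μ v : Fin n → ℝ)
    (hlt : ∀ i j : Fin n, i ≤ j → v i < μ j)
    (hgt : ∀ i j : Fin n, j < i → μ j < v i)
    (x : ℝ) (t : Fin n) (hx : x = μ t) :
    (∀ i, 0 < -(∏ j, (v i - μ j)) / ∏ j ∈ Finset.univ.erase i, (v i - v j)) ∧
    ∑ i, (-(∏ j, (v i - μ j)) / ∏ j ∈ Finset.univ.erase i, (v i - v j)) / (x - v i) = 1 := by
  set a : Fin n → ℝ :=
    fun i => -(∏ j, (v i - μ j)) / ∏ j ∈ Finset.univ.erase i, (v i - v j) with ha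
  have hvmono : StrictMono v := fun i j h => (hlt i i le_rfl).trans (hgt j i h)
  have hvinj : Function.Injective v := hvmono.injective
  set d : Fin n → ℝ := fun i => ∏ j ∈ Finset.univ.erase i, (v i - v j) with hd
  have hdne : ∀ i, d i ≠ 0 := by
    intro i
    apply Finset.prod_ne_zero_iff.mpr
    intro j hj
    exact sub_ne_zero_of_ne (fun h => (Finset.mem_erase.mp hj).1 ((hvinj h).symm))
  -- positivity
  have hpos : ∀ i, 0 < a i := by
    intro i
    have hsplit : (∏ j, (v i - μ j)) = (v i - μ i) * ∏ j ∈ Finset.univ.erase i, (v i - μ j) :=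
      (Finset.mul_prod_erase Finset.univ _ (Finset.mem_univ i)).symm
    have : a i = (μ i - v i) * ∏ j ∈ Finset.univ.erase i, ((v i - μ j) / (v i - v j)) := by
      show -(∏ j, (v i - μ j)) / (∏ j ∈ Finset.univ.erase i, (v i - v j)) = _
      rw [hsplit, Finset.prod_div_distrib]
      ring
    rw [this]
    apply mul_pos (by linarith [hlt i i le_rfl])
    apply Finset.prod_pos
    intro j hj
    rcases lt_or_gt_of_ne (fun h : j = i => (Finset.mem_erase.mp hj).1 h) with hji | hij
    · exact div_pos (by linarith [hgt i j hji]) (by linarith [hvmono hji])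
    · exact div_pos_of_neg_of_neg (by linarith [hlt i j (le_of_lt hij)])
        (by linarith [hvmono hij])
  refine ⟨hpos, ?_⟩
  -- Lagrange identity
  set P : ℝ[X] := ∏ i, (X - C (v i)) with hP
  set Pμ : ℝ[X] := ∏ i, (X - C (μ i)) with hPμ
  set L : ℝ[X] := ∑ i, C (a i) * ∏ j ∈ Finset.univ.erase i, (X - C (v j)) with hL
  have hPmonic : P.Monic := monic_prod_of_monic _ _ fun i _ => monic_X_sub_C _
  have hPμmonic : Pμ.Monic := monic_prod_of_monic _ _ fun i _ => monic_X_sub_C _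
  have hPdeg : P.degree = n := by
    rw [hP, degree_prod]
    simp [degree_X_sub_C]
  have hPμdeg : Pμ.degree = n := by
    rw [hPμ, degree_prod]
    simp [degree_X_sub_C]
  have hsubdeg : (P - Pμ).degree < n := by
    rcases eq_or_ne P Pμ with h | h
    · simp [h]
    · calc (P - Pμ).degree < P.degree := degree_sub_lt (hPdeg.trans hPμdeg.symm)
            hPmonic.ne_zero (by rw [hPmonic.leadingCoeff, hPμmonic.leadingCoeff])
        _ = n := hPdeg
  have hLdeg : L.degree < n := by
    rw [hL]
    apply lt_of_le_of_lt (degree_sum_le _ _)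
    apply Finset.sup_lt_iff (by exact_mod_cast WithBot.bot_lt_coe n) |>.mpr
    intro i _
    calc (C (a i) * ∏ j ∈ Finset.univ.erase i, (X - C (v j))).degree
        ≤ (C (a i)).degree + (∏ j ∈ Finset.univ.erase i, (X - C (v j))).degree := degree_mul_le _ _
      _ ≤ 0 + (n - 1 : ℕ) := by
          apply add_le_add degree_C_le
          rw [degree_prod]
          simp only [degree_X_sub_C]
          rw [Finset.sum_const, Finset.card_erase_of_mem (Finset.mem_univ i), Finset.card_univ,
            Fintype.card_fin]
          simp
      _ < n := by
          rw [zero_add]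
          exact_mod_cast Nat.cast_lt.mpr (Nat.sub_lt i.pos one_pos)
  have hkey : L = P - Pμ := by
    apply eq_of_degrees_lt_of_eval_index_eq (v := v) Finset.univ (hvinj.injOn)
    · simpa using hLdeg
    · simpa using hsubdeg
    · intro i _
      have hevalL : L.eval (v i) = a i * d i := by
        rw [hL, eval_finset_sum]
        rw [Finset.sum_eq_single i]
        · simp [hd, eval_prod]
        · intro b _ hbi
          rw [eval_mul, eval_prod]
          apply mul_eq_zero_of_right
          apply Finset.prod_eq_zero (Finset.mem_erase.mpr ⟨hbi.symm, Finset.mem_univ i⟩)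
          simp
        · simp
      have hevalP : P.eval (v i) = 0 := by
        rw [hP, eval_prod]
        apply Finset.prod_eq_zero (Finset.mem_univ i)
        simp
      rw [hevalL, eval_sub, hevalP, zero_sub, ha]
      rw [div_mul_cancel₀ _ (hdne i)]
      rw [hPμ, eval_prod]
      simp
  -- evaluate at x
  have hxne : ∀ j, x - v j ≠ 0 := by
    intro j
    rcases le_or_gt j t with h | h
    · have := hlt j t h; rw [hx]; intro hc; linarith [sub_eq_zero.mp hc]
    · have := hgt j t h; rw [hx]; intro hc; linarith [sub_eq_zero.mp hc]
  have hPx : P.eval x ≠ 0 := by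
    rw [hP, eval_prod]
    apply Finset.prod_ne_zero_iff.mpr
    intro j _
    simpa using hxne j
  have hPμx : Pμ.eval x = 0 := by
    rw [hPμ, eval_prod]
    apply Finset.prod_eq_zero (Finset.mem_univ t)
    simp [hx]
  have hLx : L.eval x = P.eval x := by rw [hkey, eval_sub, hPμx, sub_zero]
  have hterm : ∀ i, a i / (x - v i) =
      (C (a i) * ∏ j ∈ Finset.univ.erase i, (X - C (v j))).eval x / P.eval x := by
    intro i
    rw [eval_mul, eval_C, eval_prod]
    have hPfac : P.eval x = (x - v i) * ∏ j ∈ Finset.univ.erase i, (x - v j) := by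
      rw [hP, eval_prod]
      simp only [eval_sub, eval_X, eval_C]
      exact (Finset.mul_prod_erase Finset.univ _ (Finset.mem_univ i)).symm
    rw [hPfac]
    simp only [eval_sub, eval_X, eval_C]
    have hE : (∏ j ∈ Finset.univ.erase i, (x - v j)) ≠ 0 :=
      Finset.prod_ne_zero_iff.mpr (fun j _ => hxne j)
    rw [mul_div_mul_right _ _ hE]
  rw [Finset.sum_congr rfl (fun i _ => hterm i)]
  rw [← Finset.sum_div, ← eval_finset_sum, ← hL, hLx, div_self hPx]


/-- For any totally real algebraic integer `lam` with `lam² ∉ ℤ`, there is a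
positive integer `D` such that `D·lam` satisfies the arboreal-height-2
criterion `∑ₖ aₖ/((D·lam)² − k) = 1`. -/
theorem stmt16 (lam : ℝ) (hint : IsIntegral ℤ lam)
    (htr : ((minpoly ℚ lam).map (algebraMap ℚ ℝ)).Splits)
    (hsq : ∀ z : ℤ, (z : ℝ) ≠ lam ^ 2) :
    ∃ D : ℕ, 0 < D ∧
      ∃ a : ℕ →₀ ℕ,
        (a.sum fun k ak => (ak : ℝ) / (((D : ℝ) * lam) ^ 2 - (k : ℝ))) = 1 := by
  have hQint : IsIntegral ℚ lam := hint.tower_top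
  set p := minpoly ℚ lam with hp
  have pm : p.Monic := minpoly.monic hQint
  set m := p.natDegree with hm
  set S : ℚ[X] := C ((-1:ℚ)^m) * (p * p.comp (-X)) with hS
  have hS_even : S.comp (-X) = S := by
    rw [hS, mul_comp, mul_comp, C_comp, comp_neg_X_comp_neg_X]; ring
  set Q : ℚ[X] := Polynomial.contract 2 S with hQdef
  have hSQ : expand ℚ 2 Q = S := even_decomp' S hS_even
  have hpne : p ≠ 0 := minpoly.ne_zero hQint
  have hpcne : p.comp (-X) ≠ 0 := by
    intro h; apply hpne; rw [← comp_neg_X_comp_neg_X (p := p), h, zero_comp]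
  have hSne : S ≠ 0 :=
    mul_ne_zero (C_ne_zero.mpr (pow_ne_zero _ (by norm_num))) (mul_ne_zero hpne hpcne)
  have hQne : Q ≠ 0 := by
    intro h; apply hSne; rw [← hSQ, h, map_zero]
  have hlamne : lam ≠ 0 := by
    intro h; exact hsq 0 (by simp [h])
  have hQval : (aeval (lam^2)) Q = 0 := by
    rw [← expand_aeval 2 Q lam, hSQ, hS]
    simp [minpoly.aeval ℚ lam]
    exact Or.inl (minpoly.aeval ℚ lam)
  set G := minpoly ℚ (lam^2) with hG
  have hGdvd : G ∣ Q := minpoly.dvd ℚ _ hQval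
  set f := algebraMap ℚ ℝ with hf
  set R : Multiset ℝ := (p.map f).roots with hR
  have hcardR : R.card = m := by
    rw [hR, (splits_iff_card_roots).mp htr, natDegree_map]
  have hpmap : p.map f = (R.map fun r => X - C r).prod := by
    have := htr.eq_prod_roots_of_monic (pm.map f)
    simpa using this
  have hQmap : Q.map f = (R.map fun r => X - C (r^2)).prod := by
    apply Polynomial.expand_injective (R := ℝ) (two_pos)
    rw [← map_expand, hSQ]
    have h1 : (p.map f).comp (-X) = (R.map fun r => -X - C r).prod := by
      rw [hpmap, multiset_prod_comp, Multiset.map_map]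
      congr 1
      exact Multiset.map_congr rfl (fun r _ => by simp [sub_comp])
    have h2 : (R.map fun r => -X - C r).prod = C ((-1:ℝ)^m) * (R.map fun r => X + C r).prod := by
      have hcongr : ∀ r ∈ R, -X - C r = C (-1:ℝ) * (X + C r) := by
        intro r _; simp [C_neg]; ring
      rw [Multiset.map_congr rfl hcongr, Multiset.prod_map_mul]
      congr 1
      simp [Multiset.map_const', Multiset.prod_replicate, hcardR, ← C_pow]
    have hmapS : S.map f = C ((-1:ℝ)^m) * ((p.map f) * (p.map f).comp (-X)) := by
      rw [hS]
      simp [Polynomial.map_mul, Polynomial.map_comp, map_C]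
    rw [hmapS, h1, h2, hpmap]
    have hmain : C ((-1:ℝ)^m) * ((R.map fun r => X - C r).prod *
        (C ((-1:ℝ)^m) * (R.map fun r => X + C r).prod)) =
        (R.map fun r => (X - C r) * (X + C r)).prod := by
      rw [Multiset.prod_map_mul]
      have hC1 : C ((-1:ℝ)^m) * C ((-1:ℝ)^m) = 1 := by
        rw [← C_mul, ← pow_add]
        simp [Even.neg_one_pow ⟨m, rfl⟩]
      calc C ((-1:ℝ)^m) * ((R.map fun r => X - C r).prod *
          (C ((-1:ℝ)^m) * (R.map fun r => X + C r).prod))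
          = (C ((-1:ℝ)^m) * C ((-1:ℝ)^m)) * ((R.map fun r => X - C r).prod *
            (R.map fun r => X + C r).prod) := by ring
        _ = (R.map fun r => X - C r).prod * (R.map fun r => X + C r).prod := by
            rw [hC1, one_mul]
    rw [hmain]
    rw [map_multiset_prod, Multiset.map_map]
    congr 1
    apply Multiset.map_congr rfl
    intro r _
    simp only [Function.comp_apply, map_sub, expand_X, expand_C]
    rw [show C (r^2) = (C r)^2 by rw [← C_pow]]
    ring
  have hmonicprod : ((R.map fun r => r^2).map fun a => X - C a).prod.Monic :=
    monic_multiset_prod_of_monic _ _ (fun q _ => monic_X_sub_C _)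
  have hQlc : f Q.leadingCoeff = 1 := by
    rw [← leadingCoeff_map_of_leadingCoeff_ne_zero f (by simp [leadingCoeff_ne_zero, hQne]), hQmap]
    rw [show (R.map fun r => X - C (r^2)) = ((R.map fun r => r^2).map fun a => X - C a) by
      rw [Multiset.map_map]; rfl]
    exact hmonicprod
  have hQsplits : (Q.map f).Splits := by
    refine splits_iff_exists_multiset.mpr ⟨R.map (fun r => r^2), ?_⟩
    rw [leadingCoeff_map_of_leadingCoeff_ne_zero f (by simp [leadingCoeff_ne_zero, hQne]), hQmap, hQlc, map_one, one_mul, Multiset.map_map]; rfl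
  have hGsplits : (G.map f).Splits := hQsplits.of_dvd ((Polynomial.map_ne_zero_iff f.injective).mpr hQne) (Polynomial.map_dvd f hGdvd)
  have hGrootsposmem : ∀ x ∈ (G.map f).roots, ∃ r ∈ R, x = r^2 := by
    intro x hx
    have hle : (G.map f).roots ≤ (Q.map f).roots := by
      apply roots.le_of_dvd (by simpa [Polynomial.map_ne_zero_iff (f := f)] using hQne)
      exact Polynomial.map_dvd f hGdvd
    have : x ∈ (Q.map f).roots := Multiset.mem_of_le hle hx
    rw [hQmap] at this
    rw [show (R.map fun r => X - C (r^2)) = ((R.map fun r => r^2).map fun a => X - C a) by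
      rw [Multiset.map_map]; rfl, roots_multiset_prod_X_sub_C] at this
    obtain ⟨r, hr, rfl⟩ := Multiset.mem_map.mp this
    exact ⟨r, hr, rfl⟩
  have hrne : ∀ r ∈ R, r ≠ 0 := by
    intro r hr h0
    have hroot : IsRoot (p.map f) r := isRoot_of_mem_roots hr
    rw [h0] at hroot
    have : f (p.coeff 0) = 0 := by simpa [IsRoot, eval_map, coeff_map] using hroot
    exact minpoly.coeff_zero_ne_zero hQint hlamne (by simpa using this)
  have hGrootspos : ∀ x ∈ (G.map f).roots, 0 < x := by
    intro x hx
    obtain ⟨r, hr, rfl⟩ := hGrootsposmem x hx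
    have := hrne r hr
    positivity
  -- G properties
  have hμint : IsIntegral ℚ (lam^2) := hQint.pow 2
  have hGne : G ≠ 0 := minpoly.ne_zero hμint
  set n := G.natDegree with hn
  have hnpos : 0 < n := minpoly.natDegree_pos hμint
  have hGsep : G.Separable := (minpoly.irreducible hμint).separable
  have hnodup : (G.map f).roots.Nodup := Polynomial.nodup_roots hGsep.map
  have hcardG : Multiset.card (G.map f).roots = n := by
    rw [splits_iff_card_roots.mp hGsplits, natDegree_map]
  set sG : Finset ℝ := (G.map f).roots.toFinset with hsG
  have hsGcard : sG.card = n := by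
    rw [hsG, Multiset.toFinset_card_of_nodup hnodup, hcardG]
  set e := sG.orderIsoOfFin hsGcard with he
  set μ : Fin n → ℝ := fun i => (e i : ℝ) with hμ
  have hμmono : StrictMono μ := fun i j h => by
    exact Subtype.coe_lt_coe.mpr (e.strictMono h)
  have hμroot : ∀ i, μ i ∈ (G.map f).roots := fun i => Multiset.mem_toFinset.mp (e i).2
  have hμpos : ∀ i, 0 < μ i := fun i => hGrootspos _ (hμroot i)
  have hGmapmonic : (G.map f).Monic := (minpoly.monic hμint).map f
  have hGmapprod : G.map f = ∏ i : Fin n, (X - C (μ i)) := by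
    have h0 := hGsplits.eq_prod_roots_of_monic hGmapmonic
    rw [h0]
    have hval : (G.map f).roots = sG.val := by
      rw [hsG, Multiset.toFinset_val, Multiset.dedup_eq_self.mpr hnodup]
    rw [hval]
    rw [show ((sG.val.map fun a => X - C a).prod) = ∏ x ∈ sG, (X - C x) from rfl]
    rw [← Finset.prod_coe_sort sG (fun x => X - C (x:ℝ))]
    exact (Equiv.prod_comp e.toEquiv (fun x => X - C (x:ℝ))).symm
  have hx0root : ∃ t, μ t = lam^2 := by
    have : lam^2 ∈ (G.map f).roots := by
      rw [mem_roots (hGmapmonic.ne_zero)]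
      rw [IsRoot, eval_map, ← aeval_def, hG]
      exact minpoly.aeval ℚ _
    have hmem : lam^2 ∈ sG := Multiset.mem_toFinset.mpr this
    refine ⟨e.symm ⟨lam^2, hmem⟩, ?_⟩
    show ((e (e.symm ⟨lam^2, hmem⟩) : {x // x ∈ sG}) : ℝ) = lam^2
    rw [OrderIso.apply_symm_apply]
  obtain ⟨t, ht⟩ := hx0root
  have hmono' : Monotone μ := hμmono.monotone
  set Nlo : Fin n → ℝ := fun i =>
    if h : (i:ℕ) = 0 then 0 else μ ⟨(i:ℕ)-1, by omega⟩ with hNlo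
  have hNlo_lt : ∀ i, Nlo i < μ i := by
    intro i
    rw [hNlo]; dsimp only
    split_ifs with h
    · exact hμpos i
    · exact hμmono (by simp only [Fin.lt_def]; omega)
  have hNlo_nonneg : ∀ i, 0 ≤ Nlo i := by
    intro i; rw [hNlo]; dsimp only; split_ifs with h
    · exact le_refl 0
    · exact (hμpos _).le
  have hNlo_ge : ∀ i j : Fin n, j < i → μ j ≤ Nlo i := by
    intro i j hji
    rw [hNlo]; dsimp only
    have hji' : (j:ℕ) < (i:ℕ) := hji
    split_ifs with h
    · omega
    · exact hmono' (show j ≤ (⟨(i:ℕ)-1, by omega⟩ : Fin n) from by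
        simp only [Fin.le_def]; omega)
  have hqex : ∀ i, ∃ qq : ℚ, Nlo i < (qq:ℝ) ∧ (qq:ℝ) < μ i :=
    fun i => exists_rat_btwn (hNlo_lt i)
  choose q hq1 hq2 using hqex
  set v : Fin n → ℝ := fun i => (q i : ℝ) with hv
  have hlt : ∀ i j : Fin n, i ≤ j → v i < μ j :=
    fun i j hij => lt_of_lt_of_le (hq2 i) (hmono' hij)
  have hgt : ∀ i j : Fin n, j < i → μ j < v i :=
    fun i j hji => lt_of_le_of_lt (hNlo_ge i j hji) (hq1 i)
  have hqpos : ∀ i, 0 < q i := by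
    intro i
    have h0 : (0:ℝ) < (q i:ℝ) := lt_of_le_of_lt (hNlo_nonneg i) (hq1 i)
    exact_mod_cast h0
  obtain ⟨hapos, hsum⟩ := sum_interlace' μ v hlt hgt (lam^2) t ht.symm
  set aq : Fin n → ℚ :=
    fun i => -(G.eval (q i)) / ∏ j ∈ Finset.univ.erase i, (q i - q j) with haq
  have hfcast : ∀ r : ℚ, f r = (r : ℝ) := fun r => by rw [hf, eq_ratCast]
  have haqcast : ∀ i, ((aq i : ℚ) : ℝ) =
      -(∏ j, (v i - μ j)) / ∏ j ∈ Finset.univ.erase i, (v i - v j) := by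
    intro i
    rw [← hfcast (aq i), haq]; dsimp only
    rw [map_div₀, map_neg, map_prod]
    congr 1
    · congr 1
      have h1 : f (G.eval (q i)) = (G.map f).eval (v i) := by
        rw [eval_map, hv]; dsimp only
        rw [← hfcast (q i), eval₂_at_apply]
      rw [h1, hGmapprod, eval_prod]
      simp only [eval_sub, eval_X, eval_C]
    · apply Finset.prod_congr rfl
      intro j _
      rw [map_sub, hfcast, hfcast]
  have haqpos : ∀ i, 0 < aq i := by
    intro i
    have h2 := hapos i
    rw [← haqcast i] at h2
    exact_mod_cast h2
  set Dden : ℕ := ∏ i, ((q i).den * (aq i).den) with hD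
  have hDpos : 0 < Dden := Finset.prod_pos (fun i _ => mul_pos (q i).pos (aq i).pos)
  have hdvdq : ∀ i, ((q i).den) ∣ Dden :=
    fun i => dvd_trans (dvd_mul_right _ _) (Finset.dvd_prod_of_mem _ (Finset.mem_univ i))
  have hdvda : ∀ i, ((aq i).den) ∣ Dden :=
    fun i => dvd_trans (dvd_mul_left _ _) (Finset.dvd_prod_of_mem _ (Finset.mem_univ i))
  have hex : ∀ (r : ℚ), 0 < r → r.den ∣ Dden → ∃ kk : ℕ, (kk : ℚ) = (Dden:ℚ)^2 * r := by
    intro r hr hdvd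
    obtain ⟨c, hc⟩ := hdvd
    refine ⟨Dden * c * r.num.toNat, ?_⟩
    have hnum : (r.num.toNat : ℤ) = r.num := Int.toNat_of_nonneg (by positivity)
    have hden : ((r.den:ℚ)) ≠ 0 := by
      exact_mod_cast r.pos.ne'
    rw [show ((Dden * c * r.num.toNat : ℕ) : ℚ) = (Dden : ℚ) * c * ((r.num.toNat:ℤ):ℚ) by
      push_cast; ring, hnum]
    nth_rewrite 2 [← Rat.num_div_den r]
    rw [hc]
    push_cast
    field_simp
  choose kf hkf using fun i => hex (q i) (hqpos i) (hdvdq i)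
  choose Af hAf using fun i => hex (aq i) (haqpos i) (hdvda i)
  refine ⟨Dden, hDpos, ∑ i, Finsupp.single (kf i) (Af i), ?_⟩
  rw [← Finsupp.sum_finset_sum_index (by intro a; simp) (by
    intro a b1 b2; push_cast; rw [add_div])]
  have hterm : ∀ i, (Finsupp.single (kf i) (Af i)).sum
      (fun kk ak => (ak : ℝ) / (((Dden : ℝ) * lam) ^ 2 - (kk : ℝ))) =
      ((aq i : ℚ) : ℝ) / (lam^2 - v i) := by
    intro i
    rw [Finsupp.sum_single_index (by simp)]
    have hAcast : ((Af i : ℕ) : ℝ) = (Dden:ℝ)^2 * ((aq i : ℚ):ℝ) := by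
      have := hAf i
      have h3 : ((Af i : ℕ) : ℚ) = (Dden:ℚ)^2 * aq i := this
      exact_mod_cast congrArg (fun r : ℚ => (r : ℝ)) h3
    have hkcast : ((kf i : ℕ) : ℝ) = (Dden:ℝ)^2 * ((q i : ℚ):ℝ) := by
      have h3 : ((kf i : ℕ) : ℚ) = (Dden:ℚ)^2 * q i := hkf i
      exact_mod_cast congrArg (fun r : ℚ => (r : ℝ)) h3
    rw [hAcast, hkcast, mul_pow, hv]; dsimp only
    rw [show (Dden:ℝ)^2 * lam^2 - (Dden:ℝ)^2 * ((q i : ℚ):ℝ) =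
      (Dden:ℝ)^2 * (lam^2 - (q i:ℚ)) by ring]
    rw [mul_div_mul_left _ _ (by positivity : ((Dden:ℝ))^2 ≠ 0)]
  rw [Finset.sum_congr rfl (fun i _ => hterm i)]
  rw [Finset.sum_congr rfl (fun i _ => by rw [haqcast i])]
  exact hsum
end

section
/- Let F ∈ ℤ[x] be monic of degree n with distinct real roots r₁ < ⋯ < rₙ, and let 0 ≤ k₁ < r₁ < k₂ < ⋯ < kₙ < rₙ with kᵢ ∈ ℤ. Then for every positive integer D divisible by lcm over i of ∏_{j≠i}(kᵢ − kⱼ) (up to sign), the rational numbers D²F(kᵢ)/∏_{j≠i}(kᵢ − kⱼ) are integers, and Σᵢ (−D²F(kᵢ)/∏_{j≠i}(kᵢ−kⱼ)) / (D²α − D²kᵢ) = 1 for any root α of F. -/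
open Polynomial Finset

/-- Quantitative core of the scaling theorem: if `0 ≤ k₁ < r₁ < k₂ < ⋯ < kₙ < rₙ`
is a left-interlacing set for the distinct real roots `rᵢ` of a monic
`F ∈ ℤ[x]` of degree `n`, then for any positive `D` divisible by each
`∏_{j≠i}(kᵢ − kⱼ)`, the rationals `D²F(kᵢ)/∏_{j≠i}(kᵢ − kⱼ)` are integers and
`∑ᵢ (−D²F(kᵢ)/∏_{j≠i}(kᵢ−kⱼ))/(D²α − D²kᵢ) = 1` for every root `α` of `F`. -/
theorem stmt17 (n : ℕ) (F : Polynomial ℤ) (hF : F.Monic) (hdeg : F.natDegree = n)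
    (r : Fin n → ℝ) (hrmono : StrictMono r)
    (hfact : F.map (Int.castRingHom ℝ) = ∏ i, (X - C (r i)))
    (k : Fin n → ℤ) (hkmono : StrictMono k) (hk0 : ∀ i, 0 ≤ k i)
    (hlt : ∀ i, (k i : ℝ) < r i)
    (hgt : ∀ i j : Fin n, i < j → r i < (k j : ℝ)) :
    ∀ D : ℤ, 0 < D → (∀ i, (∏ j ∈ univ.erase i, (k i - k j)) ∣ D) →
      (∀ i, ∃ z : ℤ,
          (z : ℚ) = (D ^ 2 * F.eval (k i) : ℤ) / ((∏ j ∈ univ.erase i, (k i - k j) : ℤ) : ℚ)) ∧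
      ∀ α : ℝ, Polynomial.aeval α F = 0 →
        ∑ i, ((-(D ^ 2 * F.eval (k i)) : ℤ) : ℝ) / ((∏ j ∈ univ.erase i, (k i - k j) : ℤ) : ℝ)
            / ((D : ℝ) ^ 2 * α - (D : ℝ) ^ 2 * (k i : ℝ)) = 1 := by
  intro D hD hdvd
  have hkinj : Function.Injective k := hkmono.injective
  have hcne : ∀ i : Fin n, (∏ j ∈ univ.erase i, (k i - k j)) ≠ 0 := by
    intro i h
    obtain ⟨j, hj, hj0⟩ := Finset.prod_eq_zero_iff.mp h
    exact (mem_erase.mp hj).1 (hkinj (by linarith [sub_eq_zero.mp hj0])).symm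
  constructor
  · intro i
    refine ⟨(D ^ 2 * F.eval (k i)) / (∏ j ∈ univ.erase i, (k i - k j)), ?_⟩
    exact Int.cast_div_charZero
      ((hdvd i).trans (dvd_mul_of_dvd_left (dvd_pow_self D two_ne_zero) _))
  · intro α hα
    set kr : Fin n → ℝ := fun i => ((k i : ℤ) : ℝ) with hkr
    have hkrinj : Function.Injective kr := fun a b h => hkinj (Int.cast_injective h)
    set Fr : Polynomial ℝ := F.map (Int.castRingHom ℝ) with hFr
    have hFrval : Fr.eval α = 0 := by
      have h1 : Polynomial.aeval α F = Fr.eval α := by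
        simp [hFr, aeval_def, eval_map, algebraMap_int_eq]
      rw [← h1, hα]
    obtain ⟨m, hm⟩ : ∃ m, α = r m := by
      have h0 : (∏ i, (α - r i)) = 0 := by
        have h2 : (∏ i, (X - C (r i)) : Polynomial ℝ).eval α = 0 := by
          rw [← hfact]; exact hFrval
        simpa [eval_prod] using h2
      obtain ⟨m, _, hm0⟩ := Finset.prod_eq_zero_iff.mp h0
      exact ⟨m, by linarith [sub_eq_zero.mp hm0]⟩
    have hαk : ∀ j, α ≠ kr j := by
      intro j he
      have he' : α = ((k j : ℤ) : ℝ) := he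
      rcases le_or_gt j m with h | h
      · have h1 : ((k j : ℤ) : ℝ) ≤ ((k m : ℤ) : ℝ) := by
          exact_mod_cast hkmono.monotone h
        have h2 := hlt m
        rw [hm] at he'
        linarith
      · have h2 := hgt m j h
        rw [hm] at he'
        linarith
    have hinj : Set.InjOn kr (univ : Finset (Fin n)) := fun a _ b _ h => hkrinj h
    set P : Polynomial ℝ := ∏ i, (X - C (kr i)) with hP
    have hPmonic : P.Monic := monic_prod_of_monic _ _ fun i _ => monic_X_sub_C _
    have hPdeg : P.natDegree = n := by
      rw [hP, natDegree_prod _ _ fun i _ => X_sub_C_ne_zero (kr i)]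
      simp
    have hFrmonic : Fr.Monic := hF.map _
    have hFrdeg : Fr.natDegree = n := by rw [hFr, hF.natDegree_map]; exact hdeg
    have hfdeg : (Fr - P).degree < ((univ : Finset (Fin n)).card : ℕ) := by
      have h1 : (Fr - P).degree < Fr.degree :=
        degree_sub_lt (by rw [degree_eq_natDegree hFrmonic.ne_zero,
          degree_eq_natDegree hPmonic.ne_zero, hFrdeg, hPdeg]) hFrmonic.ne_zero
          (by rw [hFrmonic.leadingCoeff, hPmonic.leadingCoeff])
      rw [degree_eq_natDegree hFrmonic.ne_zero, hFrdeg] at h1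
      simpa using h1
    have hinterp := Lagrange.eq_interpolate (v := kr) (s := univ) hinj hfdeg
    have heval := congrArg (Polynomial.eval α) hinterp
    -- values at nodes
    have hnode : ∀ i : Fin n, (Fr - P).eval (kr i) = ((F.eval (k i) : ℤ) : ℝ) := by
      intro i
      have hPz : P.eval (kr i) = 0 := by
        rw [hP, eval_prod]
        exact Finset.prod_eq_zero (mem_univ i) (by simp)
      have hFz : Fr.eval (kr i) = ((F.eval (k i) : ℤ) : ℝ) := by
        rw [hFr, eval_map]
        exact eval₂_at_apply (Int.castRingHom ℝ) (k i)
      simp [eval_sub, hPz, hFz]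
    -- evaluate the interpolation identity at α
    have hPα : P.eval α = ∏ j, (α - kr j) := by simp [hP, eval_prod]
    have hPαne : (∏ j, (α - kr j)) ≠ 0 :=
      Finset.prod_ne_zero_iff.mpr fun j _ => sub_ne_zero.mpr (hαk j)
    have hkey : -(∏ j, (α - kr j)) =
        ∑ i, ((F.eval (k i) : ℤ) : ℝ) *
          ∏ j ∈ univ.erase i, ((kr i - kr j)⁻¹ * (α - kr j)) := by
      have h2 : (Fr - P).eval α = -(∏ j, (α - kr j)) := by
        rw [eval_sub, hFrval, hPα]; ring
      rw [← h2, heval]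
      rw [Lagrange.interpolate_apply, eval_finset_sum]
      refine Finset.sum_congr rfl fun i _ => ?_
      rw [eval_mul, eval_C, hnode i, Lagrange.basis, eval_prod]
      congr 1
      refine Finset.prod_congr rfl fun j _ => ?_
      simp [Lagrange.basisDivisor]
    -- final computation
    have hDne : (D : ℝ) ≠ 0 := Int.cast_ne_zero.mpr hD.ne'
    have hterm : ∀ i : Fin n,
        ((-(D ^ 2 * F.eval (k i)) : ℤ) : ℝ) / ((∏ j ∈ univ.erase i, (k i - k j) : ℤ) : ℝ)
          / ((D : ℝ) ^ 2 * α - (D : ℝ) ^ 2 * (k i : ℝ)) =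
        (((F.eval (k i) : ℤ) : ℝ) *
          ∏ j ∈ univ.erase i, ((kr i - kr j)⁻¹ * (α - kr j))) / (-(∏ j, (α - kr j))) := by
      intro i
      have hq : (∏ j ∈ univ.erase i, (α - kr j)) ≠ 0 :=
        Finset.prod_ne_zero_iff.mpr fun j _ => sub_ne_zero.mpr (hαk j)
      have hc : ((∏ j ∈ univ.erase i, (k i - k j) : ℤ) : ℝ) =
          ∏ j ∈ univ.erase i, (kr i - kr j) := by push_cast; rfl
      have hcne' : (∏ j ∈ univ.erase i, (kr i - kr j)) ≠ 0 := by
        rw [← hc]; exact_mod_cast hcne i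
      have hd : α - kr i ≠ 0 := sub_ne_zero.mpr (hαk i)
      have hsplit : (∏ j, (α - kr j)) = (α - kr i) * ∏ j ∈ univ.erase i, (α - kr j) :=
        (Finset.mul_prod_erase univ _ (mem_univ i)).symm
      rw [hsplit, hc, Finset.prod_mul_distrib, Finset.prod_inv_distrib]
      have hnum : ((-(D ^ 2 * F.eval (k i)) : ℤ) : ℝ) =
          -((D : ℝ) ^ 2 * ((F.eval (k i) : ℤ) : ℝ)) := by push_cast; ring
      rw [hnum]
      have hden : (D : ℝ) ^ 2 * α - (D : ℝ) ^ 2 * (k i : ℝ) = (D : ℝ) ^ 2 * (α - kr i) := by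
        simp only [hkr]; ring
      rw [hden]
      field_simp
    calc ∑ i, ((-(D ^ 2 * F.eval (k i)) : ℤ) : ℝ) /
            ((∏ j ∈ univ.erase i, (k i - k j) : ℤ) : ℝ)
            / ((D : ℝ) ^ 2 * α - (D : ℝ) ^ 2 * (k i : ℝ))
        = ∑ i, (((F.eval (k i) : ℤ) : ℝ) *
            ∏ j ∈ univ.erase i, ((kr i - kr j)⁻¹ * (α - kr j))) / (-(∏ j, (α - kr j))) :=
          Finset.sum_congr rfl fun i _ => hterm i
      _ = (∑ i, ((F.eval (k i) : ℤ) : ℝ) *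
            ∏ j ∈ univ.erase i, ((kr i - kr j)⁻¹ * (α - kr j))) / (-(∏ j, (α - kr j))) :=
          (Finset.sum_div _ _ _).symm
      _ = 1 := by rw [← hkey]; field_simp
end

section
/- Let λ = ζ₄₈ + ζ₄₈⁻¹ = 2cos(π/24), with F(x) = x⁴ − 8x³ + 20x² − 16x + 1 the minimal polynomial of λ². Then F(k) ≡ 1 (mod 3) for every integer k, and there do not exist nonnegative integers a₀, a₁, … (almost all zero) with Σₖ aₖ/(λ² − k) = 1. -/
open Polynomial

/-- If `μ : ℝ` has minimal polynomial over `ℚ` of degree 4, then the four elements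
`(μ-1)(μ-2)(μ-3)`, `μ(μ-2)(μ-3)`, `μ(μ-1)(μ-3)`, `μ(μ-1)(μ-2)` are linearly
independent over `ℚ`; we only need the first coordinate. -/
lemma indep4 (μ : ℝ) (hdeg : (minpoly ℚ μ).natDegree = 4) (q0 q1 q2 q3 : ℚ)
    (h : (q0 : ℝ) * ((μ-1)*(μ-2)*(μ-3)) + (q1 : ℝ) * (μ*(μ-2)*(μ-3))
      + (q2 : ℝ) * (μ*(μ-1)*(μ-3)) + (q3 : ℝ) * (μ*(μ-1)*(μ-2)) = 0) : q0 = 0 := by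
  set T : ℚ[X] := C q0 * ((X - C 1)*(X - C 2)*(X - C 3)) + C q1 * (X*(X - C 2)*(X - C 3))
      + C q2 * (X*(X - C 1)*(X - C 3)) + C q3 * (X*(X - C 1)*(X - C 2)) with hT
  have hev : aeval μ T = 0 := by
    rw [hT]
    simp only [map_add, map_mul, map_sub, aeval_X, aeval_C, map_one, map_ofNat]
    rw [show (algebraMap ℚ ℝ) q0 = (q0 : ℝ) from rfl, show (algebraMap ℚ ℝ) q1 = (q1 : ℝ) from rfl,
      show (algebraMap ℚ ℝ) q2 = (q2 : ℝ) from rfl, show (algebraMap ℚ ℝ) q3 = (q3 : ℝ) from rfl]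
    linear_combination h
  have hTz : T = 0 := by
    by_contra hne
    have hdvd : minpoly ℚ μ ∣ T := minpoly.dvd ℚ μ hev
    have hle : (minpoly ℚ μ).natDegree ≤ T.natDegree := natDegree_le_of_dvd hdvd hne
    have hT3 : T.natDegree ≤ 3 := by
      rw [hT]
      compute_degree
    omega
  have := congrArg (fun p : ℚ[X] => p.eval 0) hTz
  simp only [hT, eval_add, eval_mul, eval_sub, eval_X, eval_C, eval_zero] at this
  norm_num at this
  linarith
/-- For `lam = ζ₄₈ + ζ₄₈⁻¹ = 2cos(π/24)` with `F = x⁴ − 8x³ + 20x² − 16x + 1`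
the minimal polynomial of `lam²`: `F(k) ≡ 1 (mod 3)` for every integer `k`,
and `lam` does not satisfy the arboreal-height-2 criterion. -/
theorem stmt19 (lam : ℝ) (hlam : lam = 2 * Real.cos (Real.pi / 24))
    (F : Polynomial ℤ) (hF : F = X ^ 4 - C 8 * X ^ 3 + C 20 * X ^ 2 - C 16 * X + C 1)
    (hmin : minpoly ℚ (lam ^ 2) = F.map (Int.castRingHom ℚ)) :
    (∀ k : ℤ, F.eval k % 3 = 1) ∧
      ¬ ∃ a : ℕ →₀ ℕ, (a.sum fun k ak => (ak : ℝ) / (lam ^ 2 - (k : ℝ))) = 1 := by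
  have hevalF : ∀ k : ℤ, F.eval k = k^4 - 8*k^3 + 20*k^2 - 16*k + 1 := by
    intro k; simp [hF]
  have hmod : ∀ k : ℤ, F.eval k % 3 = 1 := by
    intro k
    have h2 : (3 : ℤ) ∣ F.eval k - 1 := by
      have hc : ((F.eval k - 1 : ℤ) : ZMod 3) = 0 := by
        rw [hevalF]
        push_cast
        generalize (k : ZMod 3) = y
        revert y; decide
      exact (ZMod.intCast_zmod_eq_zero_iff_dvd _ 3).mp hc
    omega
  refine ⟨hmod, ?_⟩
  rintro ⟨a, ha⟩
  set μ : ℝ := lam ^ 2 with hμdef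
  -- degree of the minimal polynomial
  have hFdeg : (minpoly ℚ μ).natDegree = 4 := by
    rw [hmin, Polynomial.natDegree_map_eq_of_injective
      Int.cast_injective, hF]
    compute_degree!
  -- F(μ) = 0 over ℝ
  have hμ0 : μ^4 - 8*μ^3 + 20*μ^2 - 16*μ + 1 = 0 := by
    have h := minpoly.aeval ℚ μ
    rw [hmin, hF] at h
    simp only [Polynomial.map_add, Polynomial.map_sub, Polynomial.map_mul, Polynomial.map_pow,
      Polynomial.map_X, Polynomial.map_C, map_add, map_sub, map_mul, map_pow, aeval_X, aeval_C] at h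
    norm_num at h
    linear_combination h
  -- μ is not a natural number
  have hne : ∀ k : ℕ, μ - (k : ℝ) ≠ 0 := by
    intro k hk
    have hμk : μ = algebraMap ℚ ℝ (k : ℚ) := by
      rw [sub_eq_zero] at hk
      rw [hk]; norm_num
    rw [hμk, minpoly.eq_X_sub_C, natDegree_X_sub_C] at hFdeg
    omega
  -- F(k) ≠ 0
  have hFne : ∀ k : ℤ, F.eval k ≠ 0 := by
    intro k h0
    have := hmod k
    rw [h0] at this
    norm_num at this
  set S := a.support with hS
  have haR : ∑ k ∈ S, (a k : ℝ) / (μ - (k : ℝ)) = 1 := ha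
  -- the key per-index identity
  have key : ∀ k ∈ S,
      (a k : ℝ) * (-(((k:ℝ)-1)*((k:ℝ)-2)*((k:ℝ)-3)) / (6 * ((F.eval (k:ℤ) : ℤ) : ℝ))) * ((μ-1)*(μ-2)*(μ-3))
      + (a k : ℝ) * (-((k:ℝ)*((k:ℝ)-2)*((k:ℝ)-3)) / (((F.eval (k:ℤ) : ℤ) : ℝ))) * (μ*(μ-2)*(μ-3))
      + (a k : ℝ) * (-((k:ℝ)*((k:ℝ)-1)*((k:ℝ)-3)) / (2 * ((F.eval (k:ℤ) : ℤ) : ℝ))) * (μ*(μ-1)*(μ-3))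
      + (a k : ℝ) * (-((k:ℝ)*((k:ℝ)-1)*((k:ℝ)-2)) / (3 * ((F.eval (k:ℤ) : ℤ) : ℝ))) * (μ*(μ-1)*(μ-2))
      = (a k : ℝ) / (μ - (k:ℝ)) * (μ*(μ-1)*(μ-2)*(μ-3)) := by
    intro k _
    have hFval : ((F.eval (k:ℤ) : ℤ) : ℝ) = (k:ℝ)^4 - 8*(k:ℝ)^3 + 20*(k:ℝ)^2 - 16*(k:ℝ) + 1 := by
      rw [hevalF]; push_cast; ring
    have hFkne : ((F.eval (k:ℤ) : ℤ) : ℝ) ≠ 0 := by exact_mod_cast hFne (k:ℤ)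
    have hkne := hne k
    have hclear : (μ - (k:ℝ)) * ( -(((k:ℝ)-1)*((k:ℝ)-2)*((k:ℝ)-3)) * ((μ-1)*(μ-2)*(μ-3))
        - 6*((k:ℝ)*((k:ℝ)-2)*((k:ℝ)-3)) * (μ*(μ-2)*(μ-3))
        - 3*((k:ℝ)*((k:ℝ)-1)*((k:ℝ)-3)) * (μ*(μ-1)*(μ-3))
        - 2*((k:ℝ)*((k:ℝ)-1)*((k:ℝ)-2)) * (μ*(μ-1)*(μ-2)) )
        = 6*((k:ℝ)^4 - 8*(k:ℝ)^3 + 20*(k:ℝ)^2 - 16*(k:ℝ) + 1) * (μ*(μ-1)*(μ-2)*(μ-3)) := by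
      linear_combination (-6*(k:ℝ)^4 + 36*(k:ℝ)^3 - 66*(k:ℝ)^2 + 36*(k:ℝ)) * hμ0
    have hden : (6:ℝ) * ((F.eval (k:ℤ) : ℤ) : ℝ) ≠ 0 := mul_ne_zero (by norm_num) hFkne
    have l2 : ((a k : ℝ) * ( -(((k:ℝ)-1)*((k:ℝ)-2)*((k:ℝ)-3)) * ((μ-1)*(μ-2)*(μ-3))
        - 6*((k:ℝ)*((k:ℝ)-2)*((k:ℝ)-3)) * (μ*(μ-2)*(μ-3))
        - 3*((k:ℝ)*((k:ℝ)-1)*((k:ℝ)-3)) * (μ*(μ-1)*(μ-3))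
        - 2*((k:ℝ)*((k:ℝ)-1)*((k:ℝ)-2)) * (μ*(μ-1)*(μ-2)) ))
        / (6 * ((F.eval (k:ℤ) : ℤ) : ℝ))
        = ((a k : ℝ) * (μ*(μ-1)*(μ-2)*(μ-3))) / (μ - (k:ℝ)) := by
      rw [div_eq_div_iff hden hkne, hFval]
      linear_combination (a k : ℝ) * hclear
    calc _ = ((a k : ℝ) * ( -(((k:ℝ)-1)*((k:ℝ)-2)*((k:ℝ)-3)) * ((μ-1)*(μ-2)*(μ-3))
        - 6*((k:ℝ)*((k:ℝ)-2)*((k:ℝ)-3)) * (μ*(μ-2)*(μ-3))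
        - 3*((k:ℝ)*((k:ℝ)-1)*((k:ℝ)-3)) * (μ*(μ-1)*(μ-3))
        - 2*((k:ℝ)*((k:ℝ)-1)*((k:ℝ)-2)) * (μ*(μ-1)*(μ-2)) ))
        / (6 * ((F.eval (k:ℤ) : ℤ) : ℝ)) := by ring
      _ = ((a k : ℝ) * (μ*(μ-1)*(μ-2)*(μ-3))) / (μ - (k:ℝ)) := l2
      _ = (a k : ℝ) / (μ - (k:ℝ)) * (μ*(μ-1)*(μ-2)*(μ-3)) := by ring
  have hbig : ∑ k ∈ S, ((a k : ℝ) * (-(((k:ℝ)-1)*((k:ℝ)-2)*((k:ℝ)-3)) / (6 * ((F.eval (k:ℤ) : ℤ) : ℝ))) * ((μ-1)*(μ-2)*(μ-3))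
      + (a k : ℝ) * (-((k:ℝ)*((k:ℝ)-2)*((k:ℝ)-3)) / (((F.eval (k:ℤ) : ℤ) : ℝ))) * (μ*(μ-2)*(μ-3))
      + (a k : ℝ) * (-((k:ℝ)*((k:ℝ)-1)*((k:ℝ)-3)) / (2 * ((F.eval (k:ℤ) : ℤ) : ℝ))) * (μ*(μ-1)*(μ-3))
      + (a k : ℝ) * (-((k:ℝ)*((k:ℝ)-1)*((k:ℝ)-2)) / (3 * ((F.eval (k:ℤ) : ℤ) : ℝ))) * (μ*(μ-1)*(μ-2)))
      = μ*(μ-1)*(μ-2)*(μ-3) := by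
    rw [Finset.sum_congr rfl key, ← Finset.sum_mul, haR, one_mul]
  have hsplit : ∑ k ∈ S, ((a k : ℝ) * (-(((k:ℝ)-1)*((k:ℝ)-2)*((k:ℝ)-3)) / (6 * ((F.eval (k:ℤ) : ℤ) : ℝ))) * ((μ-1)*(μ-2)*(μ-3))
      + (a k : ℝ) * (-((k:ℝ)*((k:ℝ)-2)*((k:ℝ)-3)) / (((F.eval (k:ℤ) : ℤ) : ℝ))) * (μ*(μ-2)*(μ-3))
      + (a k : ℝ) * (-((k:ℝ)*((k:ℝ)-1)*((k:ℝ)-3)) / (2 * ((F.eval (k:ℤ) : ℤ) : ℝ))) * (μ*(μ-1)*(μ-3))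
      + (a k : ℝ) * (-((k:ℝ)*((k:ℝ)-1)*((k:ℝ)-2)) / (3 * ((F.eval (k:ℤ) : ℤ) : ℝ))) * (μ*(μ-1)*(μ-2)))
      = (∑ k ∈ S, (a k : ℝ) * (-(((k:ℝ)-1)*((k:ℝ)-2)*((k:ℝ)-3)) / (6 * ((F.eval (k:ℤ) : ℤ) : ℝ)))) * ((μ-1)*(μ-2)*(μ-3)) + (∑ k ∈ S, (a k : ℝ) * (-((k:ℝ)*((k:ℝ)-2)*((k:ℝ)-3)) / (((F.eval (k:ℤ) : ℤ) : ℝ)))) * (μ*(μ-2)*(μ-3))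
      + (∑ k ∈ S, (a k : ℝ) * (-((k:ℝ)*((k:ℝ)-1)*((k:ℝ)-3)) / (2 * ((F.eval (k:ℤ) : ℤ) : ℝ)))) * (μ*(μ-1)*(μ-3)) + (∑ k ∈ S, (a k : ℝ) * (-((k:ℝ)*((k:ℝ)-1)*((k:ℝ)-2)) / (3 * ((F.eval (k:ℤ) : ℤ) : ℝ)))) * (μ*(μ-1)*(μ-2)) := by
    rw [Finset.sum_add_distrib, Finset.sum_add_distrib, Finset.sum_add_distrib,
      ← Finset.sum_mul, ← Finset.sum_mul, ← Finset.sum_mul, ← Finset.sum_mul]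
  have hL : (1/6:ℝ) * ((μ-1)*(μ-2)*(μ-3)) + 1 * (μ*(μ-2)*(μ-3)) + (1/2:ℝ) * (μ*(μ-1)*(μ-3)) + (1/3:ℝ) * (μ*(μ-1)*(μ-2))
      = μ*(μ-1)*(μ-2)*(μ-3) := by
    linear_combination (-1 : ℝ) * hμ0
  have cast0 : (((∑ k ∈ S, (a k : ℚ) * (-(((k:ℚ)-1)*((k:ℚ)-2)*((k:ℚ)-3)) / (6 * ((F.eval (k:ℤ) : ℤ) : ℚ)))) : ℚ) : ℝ) = (∑ k ∈ S, (a k : ℝ) * (-(((k:ℝ)-1)*((k:ℝ)-2)*((k:ℝ)-3)) / (6 * ((F.eval (k:ℤ) : ℤ) : ℝ)))) := by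
    rw [Rat.cast_sum]; exact Finset.sum_congr rfl fun k _ => by push_cast; ring
  have cast1 : (((∑ k ∈ S, (a k : ℚ) * (-((k:ℚ)*((k:ℚ)-2)*((k:ℚ)-3)) / ((F.eval (k:ℤ) : ℤ) : ℚ))) : ℚ) : ℝ) = (∑ k ∈ S, (a k : ℝ) * (-((k:ℝ)*((k:ℝ)-2)*((k:ℝ)-3)) / (((F.eval (k:ℤ) : ℤ) : ℝ)))) := by
    rw [Rat.cast_sum]; exact Finset.sum_congr rfl fun k _ => by push_cast; ring
  have cast2 : (((∑ k ∈ S, (a k : ℚ) * (-((k:ℚ)*((k:ℚ)-1)*((k:ℚ)-3)) / (2 * ((F.eval (k:ℤ) : ℤ) : ℚ)))) : ℚ) : ℝ) = (∑ k ∈ S, (a k : ℝ) * (-((k:ℝ)*((k:ℝ)-1)*((k:ℝ)-3)) / (2 * ((F.eval (k:ℤ) : ℤ) : ℝ)))) := by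
    rw [Rat.cast_sum]; exact Finset.sum_congr rfl fun k _ => by push_cast; ring
  have cast3 : (((∑ k ∈ S, (a k : ℚ) * (-((k:ℚ)*((k:ℚ)-1)*((k:ℚ)-2)) / (3 * ((F.eval (k:ℤ) : ℤ) : ℚ)))) : ℚ) : ℝ) = (∑ k ∈ S, (a k : ℝ) * (-((k:ℝ)*((k:ℝ)-1)*((k:ℝ)-2)) / (3 * ((F.eval (k:ℤ) : ℤ) : ℝ)))) := by
    rw [Rat.cast_sum]; exact Finset.sum_congr rfl fun k _ => by push_cast; ring
  have hind : ((∑ k ∈ S, (a k : ℚ) * (-(((k:ℚ)-1)*((k:ℚ)-2)*((k:ℚ)-3)) / (6 * ((F.eval (k:ℤ) : ℤ) : ℚ))))) - 1/6 = 0 := by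
    refine indep4 μ hFdeg _ (((∑ k ∈ S, (a k : ℚ) * (-((k:ℚ)*((k:ℚ)-2)*((k:ℚ)-3)) / ((F.eval (k:ℤ) : ℤ) : ℚ)))) - 1) (((∑ k ∈ S, (a k : ℚ) * (-((k:ℚ)*((k:ℚ)-1)*((k:ℚ)-3)) / (2 * ((F.eval (k:ℤ) : ℤ) : ℚ))))) - 1/2) (((∑ k ∈ S, (a k : ℚ) * (-((k:ℚ)*((k:ℚ)-1)*((k:ℚ)-2)) / (3 * ((F.eval (k:ℤ) : ℤ) : ℚ))))) - 1/3) ?_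
    have c0' : ((((∑ k ∈ S, (a k : ℚ) * (-(((k:ℚ)-1)*((k:ℚ)-2)*((k:ℚ)-3)) / (6 * ((F.eval (k:ℤ) : ℤ) : ℚ))))) - 1/6 : ℚ) : ℝ) = (∑ k ∈ S, (a k : ℝ) * (-(((k:ℝ)-1)*((k:ℝ)-2)*((k:ℝ)-3)) / (6 * ((F.eval (k:ℤ) : ℤ) : ℝ)))) - 1/6 := by
      rw [Rat.cast_sub, cast0]; norm_num
    have c1' : ((((∑ k ∈ S, (a k : ℚ) * (-((k:ℚ)*((k:ℚ)-2)*((k:ℚ)-3)) / ((F.eval (k:ℤ) : ℤ) : ℚ)))) - 1 : ℚ) : ℝ) = (∑ k ∈ S, (a k : ℝ) * (-((k:ℝ)*((k:ℝ)-2)*((k:ℝ)-3)) / (((F.eval (k:ℤ) : ℤ) : ℝ)))) - 1 := by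
      rw [Rat.cast_sub, cast1]; norm_num
    have c2' : ((((∑ k ∈ S, (a k : ℚ) * (-((k:ℚ)*((k:ℚ)-1)*((k:ℚ)-3)) / (2 * ((F.eval (k:ℤ) : ℤ) : ℚ))))) - 1/2 : ℚ) : ℝ) = (∑ k ∈ S, (a k : ℝ) * (-((k:ℝ)*((k:ℝ)-1)*((k:ℝ)-3)) / (2 * ((F.eval (k:ℤ) : ℤ) : ℝ)))) - 1/2 := by
      rw [Rat.cast_sub, cast2]; norm_num
    have c3' : ((((∑ k ∈ S, (a k : ℚ) * (-((k:ℚ)*((k:ℚ)-1)*((k:ℚ)-2)) / (3 * ((F.eval (k:ℤ) : ℤ) : ℚ))))) - 1/3 : ℚ) : ℝ) = (∑ k ∈ S, (a k : ℝ) * (-((k:ℝ)*((k:ℝ)-1)*((k:ℝ)-2)) / (3 * ((F.eval (k:ℤ) : ℤ) : ℝ)))) - 1/3 := by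
      rw [Rat.cast_sub, cast3]; norm_num
    rw [c0', c1', c2', c3', sub_mul, sub_mul, sub_mul, sub_mul]
    linear_combination hbig - hsplit - hL
  have hq0 : (∑ k ∈ S, (a k : ℚ) * (-(((k:ℚ)-1)*((k:ℚ)-2)*((k:ℚ)-3)) / (6 * ((F.eval (k:ℤ) : ℤ) : ℚ)))) = 1/6 := by linarith [hind]
  have hprod : ∑ k ∈ S, (a k : ℚ) * (((((k:ℚ))-1)*(((k:ℚ))-2)*(((k:ℚ))-3)) * ∏ j ∈ S.erase k, ((F.eval (j:ℤ) : ℤ) : ℚ))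
      = - ∏ j ∈ S, ((F.eval (j:ℤ) : ℤ) : ℚ) := by
    calc ∑ k ∈ S, (a k : ℚ) * (((((k:ℚ))-1)*(((k:ℚ))-2)*(((k:ℚ))-3)) * ∏ j ∈ S.erase k, ((F.eval (j:ℤ) : ℤ) : ℚ))
        = ∑ k ∈ S, ((a k : ℚ) * (-(((k:ℚ)-1)*((k:ℚ)-2)*((k:ℚ)-3)) / (6 * ((F.eval (k:ℤ) : ℤ) : ℚ)))) * ((-6) * ∏ j ∈ S, ((F.eval (j:ℤ) : ℤ) : ℚ)) := by
          refine Finset.sum_congr rfl fun k hk => ?_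
          rw [← Finset.mul_prod_erase S (fun j => ((F.eval (j:ℤ) : ℤ) : ℚ)) hk]
          have hne' : ((F.eval (k:ℤ) : ℤ) : ℚ) ≠ 0 := by exact_mod_cast hFne (k:ℤ)
          field_simp
      _ = ((∑ k ∈ S, (a k : ℚ) * (-(((k:ℚ)-1)*((k:ℚ)-2)*((k:ℚ)-3)) / (6 * ((F.eval (k:ℤ) : ℤ) : ℚ))))) * ((-6) * ∏ j ∈ S, ((F.eval (j:ℤ) : ℤ) : ℚ)) := by rw [Finset.sum_mul]
      _ = (1/6 : ℚ) * ((-6) * ∏ j ∈ S, ((F.eval (j:ℤ) : ℤ) : ℚ)) := by rw [hq0]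
      _ = - ∏ j ∈ S, ((F.eval (j:ℤ) : ℤ) : ℚ) := by ring
  have hZ : ∑ k ∈ S, (a k : ℤ) * ((((k:ℤ)-1)*((k:ℤ)-2)*((k:ℤ)-3)) * ∏ j ∈ S.erase k, F.eval (j:ℤ))
      = - ∏ j ∈ S, F.eval (j:ℤ) := by exact_mod_cast hprod
  have castF : ∀ j : ℕ, ((F.eval (j:ℤ) : ℤ) : ZMod 3) = 1 := by
    intro j
    have hd : (3:ℤ) ∣ F.eval (j:ℤ) - 1 := by have := hmod (j:ℤ); omega
    have h0 : ((F.eval (j:ℤ) - 1 : ℤ) : ZMod 3) = 0 := (ZMod.intCast_zmod_eq_zero_iff_dvd _ 3).mpr hd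
    push_cast at h0
    linear_combination h0
  have hy : ∀ y : ZMod 3, (y-1)*(y-2)*(y-3) = 0 := by decide
  have h3 := congrArg (fun z : ℤ => (z : ZMod 3)) hZ
  push_cast at h3
  simp only [hy, zero_mul, mul_zero, Finset.sum_const_zero, castF, Finset.prod_const_one] at h3
  exact absurd h3 (by decide)
end
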